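/- arXiv:2605.18846 — 6 statements merged into one kernel-verified Lean document; each statement's English description precedes it below -/
import Mathlib

section
/- Let K ≥ 2, let p be a probability vector on Fin K with p_i > 0 for all i, and let π be a derangement of Fin K. Define the joint pmfs P_id(i,j) = p_i·[j = i] and P_π(i,j) = p_i·[j = π(i)] on (Fin K) × (Fin K). Then: (a) both joints have first marginal p; (b) the second marginal of P_id is p and the second marginal of P_π is j ↦ p_{π⁻¹(j)}, and these two second marginals have equal Shannon entropy H(p); (c) both joints have mutual information equal to H(p); and yet (d) the codebook agreement satisfies A(P_id) = 1 while A(P_π) = Σ_{i : π(i) = i} p_i = 0. -/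
/-! A joint supported on the graph of a permutation `σ` is a deterministic channel: its
marginals are `p` and `p ∘ σ⁻¹`, and on its support `P(i, σ i) / (p i · p i) = (p i)⁻¹`, so its
mutual information is `H(p)` whatever `σ` is. Only the diagonal, and hence the codebook
agreement `Σ_{σ i = i} p i`, sees the difference between the identity and a derangement. -/

/-- A probability mass function on a finite type: nonnegative and summing to 1. -/
def IsPMF {Z : Type*} [Fintype Z] (q : Z → ℝ) : Prop :=
  (∀ z, 0 ≤ q z) ∧ ∑ z, q z = 1

/-- Shannon entropy of a pmf (convention 0·log 0 = 0, automatic in Lean). -/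
noncomputable def shannonEntropy {K : ℕ} (p : Fin K → ℝ) : ℝ :=
  -∑ i, p i * Real.log (p i)

/-- Mutual information of a joint pmf on (Fin K) × (Fin K) with respect to its
marginals (convention 0·log 0 = 0, automatic in Lean). -/
noncomputable def mutualInfo {K : ℕ} (P : Fin K × Fin K → ℝ) : ℝ :=
  ∑ i, ∑ j, P (i, j) * Real.log (P (i, j) / ((∑ j', P (i, j')) * (∑ i', P (i', j))))

/-- The deterministic diagonal joint `P_id(i,j) = p_i·[j = i]`. -/
noncomputable def Pid {K : ℕ} (p : Fin K → ℝ) : Fin K × Fin K → ℝ :=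
  fun ij => p ij.1 * (if ij.2 = ij.1 then 1 else 0)

/-- The deterministic permuted joint `P_π(i,j) = p_i·[j = π(i)]`. -/
noncomputable def Pperm {K : ℕ} (p : Fin K → ℝ) (π : Equiv.Perm (Fin K)) :
    Fin K × Fin K → ℝ :=
  fun ij => p ij.1 * (if ij.2 = π ij.1 then 1 else 0)

open Finset

section

variable {K : ℕ} (p : Fin K → ℝ) (σ : Equiv.Perm (Fin K))

theorem Pperm_apply_eq_ite (i j : Fin K) : Pperm p σ (i, j) = if j = σ i then p i else 0 := by
  simp [Pperm]

theorem sum_Pperm_fst (i : Fin K) : ∑ j, Pperm p σ (i, j) = p i := by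
  simp [Pperm_apply_eq_ite]

theorem sum_Pperm_snd (j : Fin K) : ∑ i, Pperm p σ (i, j) = p (σ.symm j) := by
  simp [Pperm_apply_eq_ite, ← Equiv.symm_apply_eq]

theorem sum_Pperm_diag : ∑ i, Pperm p σ (i, i) = ∑ i ∈ univ.filter (fun i => σ i = i), p i := by
  simp only [Pperm_apply_eq_ite, sum_filter, eq_comm]

theorem mutualInfo_Pperm : mutualInfo (Pperm p σ) = shannonEntropy p := by
  simp only [mutualInfo, shannonEntropy, sum_Pperm_fst, sum_Pperm_snd, ← sum_neg_distrib]
  refine sum_congr rfl fun i _ => ?_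
  rw [Fintype.sum_eq_single (σ i) fun j hj => by simp [Pperm_apply_eq_ite, hj]]
  -- `a / (a * a) = a⁻¹` holds even at `a = 0`, because `0⁻¹ = 0`.
  simp [Pperm_apply_eq_ite, div_self_mul_self', Real.log_inv]

end

theorem Pid_eq_Pperm_one {K : ℕ} (p : Fin K → ℝ) : Pid p = Pperm p 1 := rfl

theorem shannonEntropy_comp_perm {K : ℕ} (p : Fin K → ℝ) (σ : Equiv.Perm (Fin K)) :
    shannonEntropy (fun j => p (σ j)) = shannonEntropy p := by
  rw [shannonEntropy, Equiv.sum_comp σ fun j => p j * Real.log (p j), shannonEntropy]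

theorem nonuniform_marginal_impossibility_general (K : ℕ)
    (p : Fin K → ℝ) (hp : IsPMF p)
    (π : Equiv.Perm (Fin K)) (hder : ∀ i, π i ≠ i) :
    -- (a) both joints have first marginal p
    (∀ i : Fin K, ∑ j, Pid p (i, j) = p i) ∧
    (∀ i : Fin K, ∑ j, Pperm p π (i, j) = p i) ∧
    -- (b) second marginals: p and j ↦ p (π⁻¹ j), of equal Shannon entropy H(p)
    (∀ j : Fin K, ∑ i, Pid p (i, j) = p j) ∧
    (∀ j : Fin K, ∑ i, Pperm p π (i, j) = p (π.symm j)) ∧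
    shannonEntropy (fun j => p (π.symm j)) = shannonEntropy p ∧
    -- (c) both joints have mutual information H(p)
    mutualInfo (Pid p) = shannonEntropy p ∧
    mutualInfo (Pperm p π) = shannonEntropy p ∧
    -- (d) opposite codebook agreement
    (∑ i, Pid p (i, i)) = 1 ∧
    (∑ i, Pperm p π (i, i)) = ∑ i ∈ Finset.univ.filter (fun i => π i = i), p i ∧
    (∑ i, Pperm p π (i, i)) = 0 := by
  have no_fixed_points : univ.filter (fun i => π i = i) = ∅ :=
    filter_false_of_mem fun i _ => hder i
  rw [Pid_eq_Pperm_one]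
  refine ⟨sum_Pperm_fst p 1, sum_Pperm_fst p π, sum_Pperm_snd p 1, sum_Pperm_snd p π,
    shannonEntropy_comp_perm p π.symm, mutualInfo_Pperm p 1, mutualInfo_Pperm p π,
    ?_, sum_Pperm_diag p π, ?_⟩
  · simpa [sum_Pperm_diag] using hp.2
  · rw [sum_Pperm_diag, no_fixed_points, sum_empty]

/-- **Non-uniform marginal extension of the marginal-impossibility result.**
For any positive probability vector `p` on `Fin K` (`K ≥ 2`) and any derangement `π`,
the joints `P_id` and `P_π` share the first marginal `p`, their second marginals are
`p` and `j ↦ p(π⁻¹ j)` (of equal Shannon entropy `H(p)`), both have mutual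
information `H(p)`, yet the codebook agreement is `1` versus
`Σ_{i : π i = i} p_i = 0`. -/
theorem nonuniform_marginal_impossibility (K : ℕ) (hK : 2 ≤ K)
    (p : Fin K → ℝ) (hp : IsPMF p) (hpos : ∀ i, 0 < p i)
    (π : Equiv.Perm (Fin K)) (hder : ∀ i, π i ≠ i) :
    -- (a) both joints have first marginal p
    (∀ i : Fin K, ∑ j, Pid p (i, j) = p i) ∧
    (∀ i : Fin K, ∑ j, Pperm p π (i, j) = p i) ∧
    -- (b) second marginals: p and j ↦ p (π⁻¹ j), of equal Shannon entropy H(p)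
    (∀ j : Fin K, ∑ i, Pid p (i, j) = p j) ∧
    (∀ j : Fin K, ∑ i, Pperm p π (i, j) = p (π.symm j)) ∧
    shannonEntropy (fun j => p (π.symm j)) = shannonEntropy p ∧
    -- (c) both joints have mutual information H(p)
    mutualInfo (Pid p) = shannonEntropy p ∧
    mutualInfo (Pperm p π) = shannonEntropy p ∧
    -- (d) opposite codebook agreement
    (∑ i, Pid p (i, i)) = 1 ∧
    (∑ i, Pperm p π (i, i)) = ∑ i ∈ Finset.univ.filter (fun i => π i = i), p i ∧
    (∑ i, Pperm p π (i, i)) = 0 :=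
  nonuniform_marginal_impossibility_general K p hp π hder
end

section
/- Let X and Z be finite types, let μ be a pmf on X, and for each x with μ(x) > 0 let q(·|x) and p(·|x) be pmfs on Z with q(·|x) absolutely continuous with respect to p(·|x). Let E ⊆ Z, and define η_q(x) = Σ_{z∈E} q(z|x), η_p(x) = Σ_{z∈E} p(z|x), η̄_q = Σ_x μ(x)·η_q(x), η̄_p = Σ_x μ(x)·η_p(x), the average variational gap Δ̄ = Σ_x μ(x)·KL(q(·|x)‖p(·|x)), the Jensen residual J_E = Σ_x μ(x)·d_bin(η_q(x)‖η_p(x)) − d_bin(η̄_q‖η̄_p), and the within-cell residual ρ̄_E = Σ_x μ(x)·[ η_q(x)·KL(q(·|x) conditioned on E ‖ p(·|x) conditioned on E) + (1−η_q(x))·KL(q(·|x) conditioned on Eᶜ ‖ p(·|x) conditioned on Eᶜ) ], where terms with zero weight are omitted. Then the codebook disagreement identity holds: Δ̄ = d_bin(η̄_q‖η̄_p) + J_E + ρ̄_E, with J_E ≥ 0 and ρ̄_E ≥ 0. -/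
/-- KL divergence between pmfs on a finite type (convention 0·log 0 = 0,
automatic in Lean). -/
noncomputable def KL {Z : Type*} [Fintype Z] (q p : Z → ℝ) : ℝ :=
  ∑ z, q z * Real.log (q z / p z)

/-- Binary KL divergence `d_bin(a‖b)` (convention 0·log 0 = 0, automatic in Lean). -/
noncomputable def dbin (a b : ℝ) : ℝ :=
  a * Real.log (a / b) + (1 - a) * Real.log ((1 - a) / (1 - b))

/-- Mass of a set under a pmf. -/
noncomputable def setMass {Z : Type*} [Fintype Z] (E : Finset Z) (q : Z → ℝ) : ℝ :=
  ∑ z ∈ E, q z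

/-- `q` conditioned on a set `E`: `z ↦ q z · [z ∈ E] / q(E)`. -/
noncomputable def condSet {Z : Type*} [Fintype Z] [DecidableEq Z] (E : Finset Z) (q : Z → ℝ) : Z → ℝ :=
  fun z => (if z ∈ E then q z else 0) / setMass E q

open Finset

/-- Log-sum inequality. -/
lemma log_sum_ineq {ι : Type*} [Fintype ι] (a b : ι → ℝ)
    (ha : ∀ i, 0 ≤ a i) (hb : ∀ i, 0 ≤ b i) (hab : ∀ i, b i = 0 → a i = 0) :
    (∑ i, a i) * Real.log ((∑ i, a i) / (∑ i, b i)) ≤ ∑ i, a i * Real.log (a i / b i) := by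
  set A := ∑ i, a i with hAdef
  set B := ∑ i, b i with hBdef
  rcases eq_or_lt_of_le (Finset.sum_nonneg fun i _ => ha i) with h0 | hApos
  · have hall : ∀ i, a i = 0 := by
      intro i
      have := (Finset.sum_eq_zero_iff_of_nonneg (fun i _ => ha i)).mp h0.symm
      exact this i (mem_univ i)
    have : ∑ i, a i * Real.log (a i / b i) = 0 :=
      Finset.sum_eq_zero fun i _ => by rw [hall i]; ring
    rw [this, hAdef, ← h0]; simp
  · have hBpos : 0 < B := by
      rcases eq_or_lt_of_le (Finset.sum_nonneg fun i _ => hb i) with h0 | h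
      · exfalso
        have hallb := (Finset.sum_eq_zero_iff_of_nonneg (fun i _ => hb i)).mp h0.symm
        have : A = 0 := Finset.sum_eq_zero fun i _ => hab i (hallb i (mem_univ i))
        linarith
      · exact h
    have key : ∀ i, a i - b i * (A / B) ≤ a i * Real.log (a i / b i) - a i * Real.log (A / B) := by
      intro i
      rcases (ha i).eq_or_lt with h | hai
      · rw [← h]
        have : 0 ≤ b i * (A / B) := mul_nonneg (hb i) (by positivity)
        simp; linarith
      · have hbi : 0 < b i := by
          rcases (hb i).eq_or_lt with h | h
          · exfalso; have := hab i h.symm; linarith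
          · exact h
        have hx : 0 < b i * A / (a i * B) := by positivity
        have hlog : Real.log (b i * A / (a i * B)) ≤ b i * A / (a i * B) - 1 :=
          Real.log_le_sub_one_of_pos hx
        have hid : Real.log (a i / b i) - Real.log (A / B) = - Real.log (b i * A / (a i * B)) := by
          rw [Real.log_div (ne_of_gt hai) (ne_of_gt hbi),
            Real.log_div (ne_of_gt hApos) (ne_of_gt hBpos),
            Real.log_div (by positivity) (by positivity),
            Real.log_mul (ne_of_gt hbi) (ne_of_gt hApos),
            Real.log_mul (ne_of_gt hai) (ne_of_gt hBpos)]
          ring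
        have h2 : a i * (Real.log (a i / b i) - Real.log (A / B))
            ≥ a i * (1 - b i * A / (a i * B)) := by
          rw [hid]
          have := mul_le_mul_of_nonneg_left hlog (le_of_lt hai)
          nlinarith
        have h3 : a i * (1 - b i * A / (a i * B)) = a i - b i * (A / B) := by
          field_simp
        nlinarith
    have hsum : ∑ i, (a i - b i * (A / B)) ≤ ∑ i, (a i * Real.log (a i / b i) - a i * Real.log (A / B)) :=
      Finset.sum_le_sum (fun i _ => key i)
    have e1 : ∑ i, (a i - b i * (A / B)) = A - B * (A / B) := by
      rw [Finset.sum_sub_distrib, ← Finset.sum_mul]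
    have e2 : ∑ i, (a i * Real.log (a i / b i) - a i * Real.log (A / B))
        = (∑ i, a i * Real.log (a i / b i)) - A * Real.log (A / B) := by
      rw [Finset.sum_sub_distrib, ← Finset.sum_mul]
    rw [e1, e2] at hsum
    have : B * (A / B) = A := by field_simp
    linarith

lemma KL_nonneg' {Z : Type*} [Fintype Z] (q p : Z → ℝ) (hq : IsPMF q) (hp : IsPMF p)
    (habs : ∀ z, p z = 0 → q z = 0) : 0 ≤ KL q p := by
  have h := log_sum_ineq q p hq.1 hp.1 habs
  rw [hq.2, hp.2] at h
  simpa [KL] using h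

lemma setMass_nonneg {Z : Type*} [Fintype Z] (E : Finset Z) (q : Z → ℝ)
    (hq : ∀ z, 0 ≤ q z) : 0 ≤ setMass E q :=
  Finset.sum_nonneg fun z _ => hq z

lemma setMass_pos_of {Z : Type*} [Fintype Z] (E : Finset Z) (q p : Z → ℝ)
    (hq : ∀ z, 0 ≤ q z) (hp : ∀ z, 0 ≤ p z) (habs : ∀ z, p z = 0 → q z = 0)
    (h : 0 < setMass E q) : 0 < setMass E p := by
  rcases (setMass_nonneg E p hp).eq_or_lt with h0 | h0
  · exfalso
    have hzero := (Finset.sum_eq_zero_iff_of_nonneg (fun z _ => hp z)).mp h0.symm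
    have : setMass E q = 0 := Finset.sum_eq_zero fun z hz => habs z (hzero z hz)
    linarith
  · exact h0

lemma condSet_isPMF {Z : Type*} [Fintype Z] [DecidableEq Z] (E : Finset Z) (q : Z → ℝ)
    (hq : ∀ z, 0 ≤ q z) (h : 0 < setMass E q) : IsPMF (condSet E q) := by
  constructor
  · intro z
    unfold condSet
    apply div_nonneg _ (le_of_lt h)
    split <;> simp [hq]
  · unfold condSet
    rw [← Finset.sum_div]
    rw [Finset.sum_ite_mem, Finset.univ_inter]
    exact div_self (ne_of_gt h)

lemma condSet_abs {Z : Type*} [Fintype Z] [DecidableEq Z] (E : Finset Z) (q p : Z → ℝ)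
    (habs : ∀ z, p z = 0 → q z = 0) (hpE : 0 < setMass E p) :
    ∀ z, condSet E p z = 0 → condSet E q z = 0 := by
  intro z hz
  unfold condSet at *
  by_cases hmem : z ∈ E
  · simp only [if_pos hmem] at *
    rw [div_eq_zero_iff] at hz
    rcases hz with h | h
    · rw [habs z h, zero_div]
    · linarith
  · simp [if_neg hmem]

/-- One-set part of the chain rule. -/
lemma kl_part {Z : Type*} [Fintype Z] [DecidableEq Z] (q p : Z → ℝ)
    (hq0 : ∀ z, 0 ≤ q z) (hp0 : ∀ z, 0 ≤ p z)
    (habs : ∀ z, p z = 0 → q z = 0) (E : Finset Z) :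
    ∑ z ∈ E, q z * Real.log (q z / p z)
      = setMass E q * Real.log (setMass E q / setMass E p)
        + setMass E q * KL (condSet E q) (condSet E p) := by
  rcases (setMass_nonneg E q hq0).eq_or_lt with hqE | hqE
  · have hzero := (Finset.sum_eq_zero_iff_of_nonneg (fun z _ => hq0 z)).mp hqE.symm
    have h1 : ∑ z ∈ E, q z * Real.log (q z / p z) = 0 :=
      Finset.sum_eq_zero fun z hz => by rw [hzero z hz]; ring
    rw [h1, ← hqE]; ring
  · have hpE : 0 < setMass E p := setMass_pos_of E q p hq0 hp0 habs hqE
    have hKL : KL (condSet E q) (condSet E p)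
        = ∑ z ∈ E, condSet E q z * Real.log (condSet E q z / condSet E p z) := by
      rw [KL]
      refine (Finset.sum_subset (Finset.subset_univ E) ?_).symm
      intro z _ hz
      unfold condSet
      rw [if_neg hz, zero_div, zero_mul]
    rw [hKL, Finset.mul_sum]
    have hmass : setMass E q * Real.log (setMass E q / setMass E p)
        = ∑ z ∈ E, q z * Real.log (setMass E q / setMass E p) := by
      rw [← Finset.sum_mul]; rfl
    rw [hmass, ← Finset.sum_add_distrib]
    apply Finset.sum_congr rfl
    intro z hz
    unfold condSet
    rw [if_pos hz, if_pos hz]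
    rcases (hq0 z).eq_or_lt with hqz | hqz
    · rw [← hqz]; simp
    · have hpz : 0 < p z := by
        rcases (hp0 z).eq_or_lt with h | h
        · exfalso; have := habs z h.symm; linarith
        · exact h
      have harg : (q z / setMass E q) / (p z / setMass E p)
          = (q z / p z) * (setMass E p / setMass E q) := by
        field_simp
      rw [harg, Real.log_mul (by positivity) (by positivity),
        Real.log_div (ne_of_gt hpE) (ne_of_gt hqE),
        Real.log_div (ne_of_gt hqE) (ne_of_gt hpE)]
      field_simp
      ring

lemma setMass_compl {Z : Type*} [Fintype Z] [DecidableEq Z] (E : Finset Z) (q : Z → ℝ)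
    (hsum : ∑ z, q z = 1) : setMass Eᶜ q = 1 - setMass E q := by
  have h := Finset.sum_add_sum_compl E q
  rw [hsum] at h
  unfold setMass
  linarith

lemma kl_chain {Z : Type*} [Fintype Z] [DecidableEq Z] (q p : Z → ℝ)
    (hq : IsPMF q) (hp : IsPMF p) (habs : ∀ z, p z = 0 → q z = 0) (E : Finset Z) :
    KL q p = dbin (setMass E q) (setMass E p)
      + (setMass E q * KL (condSet E q) (condSet E p)
         + (1 - setMass E q) * KL (condSet Eᶜ q) (condSet Eᶜ p)) := by
  have h1 := kl_part q p hq.1 hp.1 habs E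
  have h2 := kl_part q p hq.1 hp.1 habs Eᶜ
  have hqc := setMass_compl E q hq.2
  have hpc := setMass_compl E p hp.2
  have hsplit : KL q p = (∑ z ∈ E, q z * Real.log (q z / p z))
      + ∑ z ∈ Eᶜ, q z * Real.log (q z / p z) := (Finset.sum_add_sum_compl E _).symm
  rw [hqc, hpc] at h2
  rw [hsplit, h1, h2, dbin]
  ring

lemma weighted_cond_nonneg {Z : Type*} [Fintype Z] [DecidableEq Z] (q p : Z → ℝ)
    (hq0 : ∀ z, 0 ≤ q z) (hp0 : ∀ z, 0 ≤ p z) (habs : ∀ z, p z = 0 → q z = 0)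
    (E : Finset Z) : 0 ≤ setMass E q * KL (condSet E q) (condSet E p) := by
  rcases (setMass_nonneg E q hq0).eq_or_lt with h0 | h0
  · rw [← h0]; simp
  · have hpE := setMass_pos_of E q p hq0 hp0 habs h0
    exact mul_nonneg (le_of_lt h0) (KL_nonneg' _ _ (condSet_isPMF E _ hq0 h0)
      (condSet_isPMF E _ hp0 hpE) (condSet_abs E _ _ habs hpE))

/-- **Codebook disagreement identity (Corollary 2, finite case).**
With `η_q(x) = q(E|x)`, `η_p(x) = p(E|x)`, averages `η̄_q, η̄_p`,
average gap `Δ̄`, Jensen residual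
`J_E = Σ_x μ(x)·d_bin(η_q(x)‖η_p(x)) − d_bin(η̄_q‖η̄_p)` and within-cell residual
`ρ̄_E = Σ_x μ(x)·[η_q(x)·KL(q(·|x)|_E ‖ p(·|x)|_E) + (1−η_q(x))·KL(q(·|x)|_{Eᶜ} ‖ p(·|x)|_{Eᶜ})]`
(terms with zero weight vanish), we have
`Δ̄ = d_bin(η̄_q‖η̄_p) + J_E + ρ̄_E` with `J_E ≥ 0` and `ρ̄_E ≥ 0`. -/
theorem codebook_disagreement_identity
    {X Z : Type*} [Fintype X] [Fintype Z] [DecidableEq Z]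
    (μ : X → ℝ) (hμ : IsPMF μ) (q p : X → Z → ℝ)
    (hq : ∀ x, 0 < μ x → IsPMF (q x)) (hp : ∀ x, 0 < μ x → IsPMF (p x))
    (habs : ∀ x, 0 < μ x → ∀ z, p x z = 0 → q x z = 0)
    (E : Finset Z) :
    (∑ x, μ x * KL (q x) (p x)) =
        dbin (∑ x, μ x * setMass E (q x)) (∑ x, μ x * setMass E (p x))
        + ((∑ x, μ x * dbin (setMass E (q x)) (setMass E (p x)))
            - dbin (∑ x, μ x * setMass E (q x)) (∑ x, μ x * setMass E (p x)))
        + (∑ x, μ x *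
            (setMass E (q x) * KL (condSet E (q x)) (condSet E (p x))
              + (1 - setMass E (q x)) * KL (condSet Eᶜ (q x)) (condSet Eᶜ (p x)))) ∧
    0 ≤ (∑ x, μ x * dbin (setMass E (q x)) (setMass E (p x)))
          - dbin (∑ x, μ x * setMass E (q x)) (∑ x, μ x * setMass E (p x)) ∧
    0 ≤ ∑ x, μ x *
          (setMass E (q x) * KL (condSet E (q x)) (condSet E (p x))
            + (1 - setMass E (q x)) * KL (condSet Eᶜ (q x)) (condSet Eᶜ (p x))) := by
  -- within-cell residual is nonnegative
  have hrho : ∀ x, 0 ≤ μ x *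
      (setMass E (q x) * KL (condSet E (q x)) (condSet E (p x))
        + (1 - setMass E (q x)) * KL (condSet Eᶜ (q x)) (condSet Eᶜ (p x))) := by
    intro x
    rcases (hμ.1 x).eq_or_lt with h | h
    · rw [← h, zero_mul]
    · have hqx := hq x h; have hpx := hp x h; have habx := habs x h
      have t1 := weighted_cond_nonneg (q x) (p x) hqx.1 hpx.1 habx E
      have t2 := weighted_cond_nonneg (q x) (p x) hqx.1 hpx.1 habx Eᶜ
      rw [setMass_compl E (q x) hqx.2] at t2
      exact mul_nonneg (le_of_lt h) (add_nonneg t1 t2)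
  -- identity (per-x chain rule)
  have hid : (∑ x, μ x * KL (q x) (p x))
      = (∑ x, μ x * dbin (setMass E (q x)) (setMass E (p x)))
        + ∑ x, μ x *
            (setMass E (q x) * KL (condSet E (q x)) (condSet E (p x))
              + (1 - setMass E (q x)) * KL (condSet Eᶜ (q x)) (condSet Eᶜ (p x))) := by
    rw [← Finset.sum_add_distrib]
    apply Finset.sum_congr rfl
    intro x _
    rcases (hμ.1 x).eq_or_lt with h | h
    · rw [← h]; ring
    · rw [kl_chain (q x) (p x) (hq x h) (hp x h) (habs x h) E]; ring
  -- Jensen residual is nonnegative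
  have hJ : dbin (∑ x, μ x * setMass E (q x)) (∑ x, μ x * setMass E (p x))
      ≤ ∑ x, μ x * dbin (setMass E (q x)) (setMass E (p x)) := by
    set a : X → ℝ := fun x => μ x * setMass E (q x) with hadef
    set b : X → ℝ := fun x => μ x * setMass E (p x) with hbdef
    set a' : X → ℝ := fun x => μ x * (1 - setMass E (q x)) with ha'def
    set b' : X → ℝ := fun x => μ x * (1 - setMass E (p x)) with hb'def
    have hub : ∀ (r : X → Z → ℝ), (∀ x, 0 < μ x → IsPMF (r x)) → ∀ x, 0 < μ x →
        setMass E (r x) ≤ 1 := by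
      intro r hr x hx
      have := (hr x hx).2
      rw [← this]
      exact Finset.sum_le_sum_of_subset_of_nonneg (Finset.subset_univ E)
        (fun z _ _ => (hr x hx).1 z)
    have ha : ∀ x, 0 ≤ a x := by
      intro x
      rcases (hμ.1 x).eq_or_lt with h | h
      · simp [hadef, ← h]
      · exact mul_nonneg (le_of_lt h) (setMass_nonneg E _ (hq x h).1)
    have hb : ∀ x, 0 ≤ b x := by
      intro x
      rcases (hμ.1 x).eq_or_lt with h | h
      · simp [hbdef, ← h]
      · exact mul_nonneg (le_of_lt h) (setMass_nonneg E _ (hp x h).1)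
    have ha' : ∀ x, 0 ≤ a' x := by
      intro x
      rcases (hμ.1 x).eq_or_lt with h | h
      · simp [ha'def, ← h]
      · exact mul_nonneg (le_of_lt h) (by linarith [hub q hq x h])
    have hb' : ∀ x, 0 ≤ b' x := by
      intro x
      rcases (hμ.1 x).eq_or_lt with h | h
      · simp [hb'def, ← h]
      · exact mul_nonneg (le_of_lt h) (by linarith [hub p hp x h])
    have hab : ∀ x, b x = 0 → a x = 0 := by
      intro x hx
      rcases (hμ.1 x).eq_or_lt with h | h
      · simp [hadef, ← h]
      · simp only [hbdef, mul_eq_zero] at hx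
        rcases hx with h0 | h0
        · exfalso; linarith
        · have hz := (Finset.sum_eq_zero_iff_of_nonneg (fun z _ => (hp x h).1 z)).mp h0
          have : setMass E (q x) = 0 := Finset.sum_eq_zero fun z hzE => habs x h z (hz z hzE)
          simp [hadef, this]
    have hab' : ∀ x, b' x = 0 → a' x = 0 := by
      intro x hx
      rcases (hμ.1 x).eq_or_lt with h | h
      · simp [ha'def, ← h]
      · simp only [hb'def, mul_eq_zero] at hx
        rcases hx with h0 | h0
        · exfalso; linarith
        · have hpc : setMass Eᶜ (p x) = 0 := by
            rw [setMass_compl E (p x) (hp x h).2]; linarith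
          have hz := (Finset.sum_eq_zero_iff_of_nonneg (fun z _ => (hp x h).1 z)).mp hpc
          have hqc : setMass Eᶜ (q x) = 0 :=
            Finset.sum_eq_zero fun z hzE => habs x h z (hz z hzE)
          rw [setMass_compl E (q x) (hq x h).2] at hqc
          simp only [ha'def]
          rw [show (1 : ℝ) - setMass E (q x) = 0 by linarith, mul_zero]
    have L1 := log_sum_ineq a b ha hb hab
    have L2 := log_sum_ineq a' b' ha' hb' hab'
    -- sums of the weighted quantities
    have hsa' : ∑ x, a' x = 1 - ∑ x, a x := by
      simp only [ha'def, hadef, mul_sub, mul_one]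
      rw [Finset.sum_sub_distrib, hμ.2]
    have hsb' : ∑ x, b' x = 1 - ∑ x, b x := by
      simp only [hb'def, hbdef, mul_sub, mul_one]
      rw [Finset.sum_sub_distrib, hμ.2]
    -- rewrite the summed dbin termwise
    have hterm : ∑ x, μ x * dbin (setMass E (q x)) (setMass E (p x))
        = (∑ x, a x * Real.log (a x / b x)) + ∑ x, a' x * Real.log (a' x / b' x) := by
      rw [← Finset.sum_add_distrib]
      apply Finset.sum_congr rfl
      intro x _
      rcases (hμ.1 x).eq_or_lt with h | h
      · simp [hadef, hbdef, ha'def, hb'def, ← h]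
      · have hne : μ x ≠ 0 := ne_of_gt h
        simp only [hadef, hbdef, ha'def, hb'def]
        rw [mul_div_mul_left _ _ hne, mul_div_mul_left _ _ hne, dbin]
        ring
    have hbar : dbin (∑ x, μ x * setMass E (q x)) (∑ x, μ x * setMass E (p x))
        = (∑ x, a x) * Real.log ((∑ x, a x) / ∑ x, b x)
          + (∑ x, a' x) * Real.log ((∑ x, a' x) / ∑ x, b' x) := by
      rw [dbin, hsa', hsb']
    rw [hterm, hbar]
    exact add_le_add L1 L2
  refine ⟨by linarith, by linarith, Finset.sum_nonneg fun x _ => hrho x⟩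
end

section
/- Let X and Z be finite types, let μ be a pmf on X, and for each x with μ(x) > 0 let q(·|x) and p(·|x) be pmfs on Z with q(·|x) absolutely continuous with respect to p(·|x). Let E ⊆ Z, and set η̄_q = Σ_x μ(x)·Σ_{z∈E} q(z|x), η̄_p = Σ_x μ(x)·Σ_{z∈E} p(z|x), and Δ̄ = Σ_x μ(x)·KL(q(·|x)‖p(·|x)). Then the Bretagnolle–Huber form of the certificate holds: η̄_q ≤ η̄_p + sqrt(1 − exp(−Δ̄)). -/
lemma BH_core {Z : Type*} [Fintype Z] (Q P : Z → ℝ)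
    (hQ : IsPMF Q) (hP : IsPMF P) (habs : ∀ z, P z = 0 → Q z = 0)
    (E : Finset Z) :
    ∑ z ∈ E, Q z ≤ ∑ z ∈ E, P z + Real.sqrt (1 - Real.exp (-KL Q P)) := by
  classical
  obtain ⟨hQ0, hQ1⟩ := hQ
  obtain ⟨hP0, hP1⟩ := hP
  set a := ∑ z ∈ E, Q z with ha
  set b := ∑ z ∈ E, P z with hb
  have ha0 : 0 ≤ a := Finset.sum_nonneg fun z _ => hQ0 z
  have hb0 : 0 ≤ b := Finset.sum_nonneg fun z _ => hP0 z
  have ha1 : a ≤ 1 := hQ1 ▸ Finset.sum_le_sum_of_subset_of_nonneg (Finset.subset_univ E)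
    (fun z _ _ => hQ0 z)
  have hb1 : b ≤ 1 := hP1 ▸ Finset.sum_le_sum_of_subset_of_nonneg (Finset.subset_univ E)
    (fun z _ _ => hP0 z)
  -- support of Q
  set S : Finset Z := Finset.univ.filter (fun z => 0 < Q z) with hS
  have hSsum : ∑ z ∈ S, Q z = 1 := by
    rw [← hQ1]
    apply Finset.sum_subset (Finset.filter_subset _ _)
    intro z _ hz
    simp only [hS, Finset.mem_filter, Finset.mem_univ, true_and, not_lt] at hz
    exact le_antisymm hz (hQ0 z)
  have hQpos : ∀ z ∈ S, 0 < Q z := by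
    intro z hz; simp only [hS, Finset.mem_filter] at hz; exact hz.2
  have hPpos : ∀ z ∈ S, 0 < P z := by
    intro z hz
    rcases (hP0 z).eq_or_lt with h | h
    · exact absurd (habs z h.symm) (ne_of_gt (hQpos z hz))
    · exact h
  -- Jensen
  have jensen : ∑ z ∈ S, Q z * Real.log (Real.sqrt (P z / Q z))
      ≤ Real.log (∑ z ∈ S, Q z * Real.sqrt (P z / Q z)) := by
    have := (strictConcaveOn_log_Ioi.concaveOn).le_map_sum
      (t := S) (w := Q) (p := fun z => Real.sqrt (P z / Q z))
      (fun z hz => (hQpos z hz).le) hSsum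
      (fun z hz => Real.sqrt_pos.2 (div_pos (hPpos z hz) (hQpos z hz)))
    simpa [smul_eq_mul] using this
  -- LHS of Jensen is -KL/2
  have hKL : KL Q P = ∑ z ∈ S, Q z * Real.log (Q z / P z) := by
    rw [KL]
    symm
    apply Finset.sum_subset (Finset.filter_subset _ _)
    intro z _ hz
    simp only [hS, Finset.mem_filter, Finset.mem_univ, true_and, not_lt] at hz
    rw [le_antisymm hz (hQ0 z)]; ring
  have hlhs : ∑ z ∈ S, Q z * Real.log (Real.sqrt (P z / Q z)) = -(KL Q P) / 2 := by
    calc ∑ z ∈ S, Q z * Real.log (Real.sqrt (P z / Q z))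
        = ∑ z ∈ S, -(Q z * Real.log (Q z / P z)) / 2 := by
          apply Finset.sum_congr rfl
          intro z hz
          rw [Real.log_sqrt (div_nonneg (hPpos z hz).le (hQpos z hz).le)]
          have hlog : Real.log (P z / Q z) = - Real.log (Q z / P z) := by
            rw [← Real.log_inv, inv_div]
          rw [hlog]; ring
      _ = -(∑ z ∈ S, Q z * Real.log (Q z / P z)) / 2 := by
          rw [← Finset.sum_div, Finset.sum_neg_distrib]
      _ = -(KL Q P) / 2 := by rw [hKL]
  set T := ∑ z ∈ S, Q z * Real.sqrt (P z / Q z) with hT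
  have hterm : ∀ z ∈ S, Q z * Real.sqrt (P z / Q z) = Real.sqrt (Q z * P z) := by
    intro z hz
    have h1 : Q z * Real.sqrt (P z / Q z) = Real.sqrt ((Q z)^2 * (P z / Q z)) := by
      rw [Real.sqrt_mul (sq_nonneg _), Real.sqrt_sq (hQpos z hz).le]
    rw [h1]
    congr 1
    have hne : Q z ≠ 0 := (hQpos z hz).ne'
    field_simp [hne]
  have hTeq : T = ∑ z ∈ S, Real.sqrt (Q z * P z) := Finset.sum_congr rfl hterm
  -- exp(-KL/2) ≤ T
  have hT0 : 0 ≤ T := by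
    rw [hTeq]; exact Finset.sum_nonneg fun z _ => Real.sqrt_nonneg _
  have hexpT : Real.exp (-(KL Q P) / 2) ≤ T := by
    rcases hT0.eq_or_lt with h | h
    · exfalso
      -- T = 0 but S is nonempty with positive terms
      have hSne : S.Nonempty := by
        by_contra hc
        rw [Finset.not_nonempty_iff_eq_empty] at hc
        rw [hc] at hSsum; simp at hSsum
      obtain ⟨z, hz⟩ := hSne
      have : 0 < Real.sqrt (Q z * P z) :=
        Real.sqrt_pos.2 (mul_pos (hQpos z hz) (hPpos z hz))
      have hle : Real.sqrt (Q z * P z) ≤ T := by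
        rw [hTeq]
        exact Finset.single_le_sum (f := fun w => Real.sqrt (Q w * P w)) (fun i _ => Real.sqrt_nonneg _) hz
      linarith
    · calc Real.exp (-(KL Q P) / 2) ≤ Real.exp (Real.log T) := by
            apply Real.exp_le_exp.2; rw [← hlhs]; exact jensen
        _ = T := Real.exp_log h
  -- split T over E and its complement
  have hsplit : T ≤ ∑ z ∈ E, Real.sqrt (Q z * P z)
      + ∑ z ∈ Finset.univ \ E, Real.sqrt (Q z * P z) := by
    rw [hTeq]
    have h1 : ∑ z ∈ S, Real.sqrt (Q z * P z) ≤ ∑ z : Z, Real.sqrt (Q z * P z) :=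
      Finset.sum_le_sum_of_subset_of_nonneg (Finset.subset_univ S)
        (fun z _ _ => Real.sqrt_nonneg _)
    have h2 : ∑ z ∈ Finset.univ \ E, Real.sqrt (Q z * P z)
        + ∑ z ∈ E, Real.sqrt (Q z * P z) = ∑ z : Z, Real.sqrt (Q z * P z) :=
      Finset.sum_sdiff (Finset.subset_univ E)
    linarith
  -- Cauchy–Schwarz on each piece
  have hCS : ∀ F : Finset Z, ∑ z ∈ F, Real.sqrt (Q z * P z)
      ≤ Real.sqrt ((∑ z ∈ F, Q z) * (∑ z ∈ F, P z)) := by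
    intro F
    rw [← Real.sqrt_sq (Finset.sum_nonneg fun z _ => Real.sqrt_nonneg (Q z * P z))]
    apply Real.sqrt_le_sqrt
    exact Finset.sum_sq_le_sum_mul_sum_of_sq_eq_mul F
      (fun z _ => hQ0 z) (fun z _ => hP0 z)
      (fun z _ => Real.sq_sqrt (mul_nonneg (hQ0 z) (hP0 z)))
  have hcompQ : ∑ z ∈ Finset.univ \ E, Q z = 1 - a := by
    have := Finset.sum_sdiff (f := Q) (Finset.subset_univ E)
    rw [hQ1] at this; linarith
  have hcompP : ∑ z ∈ Finset.univ \ E, P z = 1 - b := by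
    have := Finset.sum_sdiff (f := P) (Finset.subset_univ E)
    rw [hP1] at this; linarith
  have hTbound : T ≤ Real.sqrt (a * b) + Real.sqrt ((1 - a) * (1 - b)) := by
    have h1 := hCS E
    have h2 := hCS (Finset.univ \ E)
    rw [hcompQ, hcompP] at h2
    rw [← ha, ← hb] at h1
    linarith
  -- the algebraic BH inequality
  set u := Real.sqrt (a * b) with hu
  set v := Real.sqrt ((1 - a) * (1 - b)) with hv
  have hu0 : 0 ≤ u := Real.sqrt_nonneg _
  have hv0 : 0 ≤ v := Real.sqrt_nonneg _
  have hu2 : u ^ 2 = a * b := Real.sq_sqrt (mul_nonneg ha0 hb0)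
  have hv2 : v ^ 2 = (1 - a) * (1 - b) :=
    Real.sq_sqrt (mul_nonneg (by linarith) (by linarith))
  have huv : (u * v) ^ 2 = (a * (1 - a)) * (b * (1 - b)) := by
    rw [mul_pow, hu2, hv2]; ring
  have hbh : (u + v) ^ 2 ≤ 1 - (a - b) ^ 2 := by
    nlinarith [sq_nonneg (a * (1 - a) - b * (1 - b)), mul_nonneg hu0 hv0,
      mul_nonneg ha0 (by linarith : (0:ℝ) ≤ 1 - a),
      mul_nonneg hb0 (by linarith : (0:ℝ) ≤ 1 - b)]
  -- conclude
  have hexp : Real.exp (-KL Q P) ≤ 1 - (a - b) ^ 2 := by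
    have h1 : Real.exp (-KL Q P) = (Real.exp (-(KL Q P) / 2)) ^ 2 := by
      rw [sq, ← Real.exp_add]
      congr 1
      ring
    have h2 : (Real.exp (-(KL Q P) / 2)) ^ 2 ≤ T ^ 2 :=
      pow_le_pow_left₀ (Real.exp_pos _).le hexpT 2
    have h3 : T ^ 2 ≤ (u + v) ^ 2 := pow_le_pow_left₀ hT0 hTbound 2
    linarith
  have hfin : a - b ≤ Real.sqrt (1 - Real.exp (-KL Q P)) := by
    have h1 : (a - b) ^ 2 ≤ 1 - Real.exp (-KL Q P) := by linarith
    calc a - b ≤ |a - b| := le_abs_self _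
      _ = Real.sqrt ((a - b) ^ 2) := (Real.sqrt_sq_eq_abs _).symm
      _ ≤ _ := Real.sqrt_le_sqrt h1
  linarith

/-- **Bretagnolle–Huber form of the audit certificate.**
With `η̄_q = Σ_x μ(x)·q(E|x)`, `η̄_p = Σ_x μ(x)·p(E|x)` and
`Δ̄ = Σ_x μ(x)·KL(q(·|x)‖p(·|x))`, we have `η̄_q ≤ η̄_p + sqrt(1 − exp(−Δ̄))`. -/
theorem bretagnolle_huber_certificate
    {X Z : Type*} [Fintype X] [Fintype Z]
    (μ : X → ℝ) (hμ : IsPMF μ) (q p : X → Z → ℝ)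
    (hq : ∀ x, 0 < μ x → IsPMF (q x)) (hp : ∀ x, 0 < μ x → IsPMF (p x))
    (habs : ∀ x, 0 < μ x → ∀ z, p x z = 0 → q x z = 0)
    (E : Finset Z) :
    (∑ x, μ x * ∑ z ∈ E, q x z)
      ≤ (∑ x, μ x * ∑ z ∈ E, p x z)
        + Real.sqrt (1 - Real.exp (-(∑ x, μ x * KL (q x) (p x)))) := by

  classical
  obtain ⟨hμ0, hμ1⟩ := hμ
  set Q : X × Z → ℝ := fun w => μ w.1 * q w.1 w.2 with hQdef
  set P : X × Z → ℝ := fun w => μ w.1 * p w.1 w.2 with hPdef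
  have hμcase : ∀ x : X, μ x = 0 ∨ 0 < μ x := fun x => (hμ0 x).eq_or_lt.imp Eq.symm id
  have hQpmf : IsPMF Q := by
    constructor
    · intro w
      rcases hμcase w.1 with h | h
      · simp [hQdef, h]
      · exact mul_nonneg (hμ0 w.1) ((hq w.1 h).1 w.2)
    · rw [Fintype.sum_prod_type]
      have : ∀ x : X, ∑ z : Z, μ x * q x z = μ x := by
        intro x
        rcases hμcase x with h | h
        · simp [h]
        · rw [← Finset.mul_sum, (hq x h).2, mul_one]
      simp_rw [hQdef, this]
      exact hμ1
  have hPpmf : IsPMF P := by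
    constructor
    · intro w
      rcases hμcase w.1 with h | h
      · simp [hPdef, h]
      · exact mul_nonneg (hμ0 w.1) ((hp w.1 h).1 w.2)
    · rw [Fintype.sum_prod_type]
      have : ∀ x : X, ∑ z : Z, μ x * p x z = μ x := by
        intro x
        rcases hμcase x with h | h
        · simp [h]
        · rw [← Finset.mul_sum, (hp x h).2, mul_one]
      simp_rw [hPdef, this]
      exact hμ1
  have habs' : ∀ w : X × Z, P w = 0 → Q w = 0 := by
    intro w hw
    rcases hμcase w.1 with h | h
    · simp [hQdef, h]
    · simp only [hPdef] at hw
      rcases mul_eq_zero.1 hw with h0 | h0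
      · exact absurd h0 (ne_of_gt h)
      · simp [hQdef, habs w.1 h w.2 h0]
  have hKLeq : KL Q P = ∑ x, μ x * KL (q x) (p x) := by
    rw [KL, Fintype.sum_prod_type]
    apply Finset.sum_congr rfl
    intro x _
    rw [KL, Finset.mul_sum]
    apply Finset.sum_congr rfl
    intro z _
    rcases hμcase x with h | h
    · simp [hQdef, hPdef, h]
    · simp only [hQdef, hPdef]
      rw [mul_div_mul_left _ _ (ne_of_gt h)]
      ring
  have key := BH_core Q P hQpmf hPpmf habs' (Finset.univ ×ˢ E)
  have e1 : ∑ w ∈ Finset.univ ×ˢ E, Q w = ∑ x, μ x * ∑ z ∈ E, q x z := by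
    rw [Finset.sum_product]
    refine Finset.sum_congr rfl fun x _ => ?_
    simp only [hQdef]
    exact (Finset.mul_sum _ _ _).symm
  have e2 : ∑ w ∈ Finset.univ ×ˢ E, P w = ∑ x, μ x * ∑ z ∈ E, p x z := by
    rw [Finset.sum_product]
    refine Finset.sum_congr rfl fun x _ => ?_
    simp only [hPdef]
    exact (Finset.mul_sum _ _ _).symm
  rw [e1, e2, hKLeq] at key
  exact key
end

section
/- Let F : ℝ^K → ℝ be differentiable, and define the Bregman divergence D_F(x‖y) = F(x) − F(y) − ⟨x − y, ∇F(y)⟩. Fix prototypes d_1, …, d_M ∈ ℝ^K and set, for each c: the center c_c = ∇F(d_c)/2, the scalar a_c = ⟨d_c, ∇F(d_c)⟩ − F(d_c), and the weight w_c = ‖∇F(d_c)‖²/4 − a_c. Then for all x ∈ ℝ^K and all indices i, j: D_F(x‖d_i) ≤ D_F(x‖d_j) if and only if ‖x − c_i‖² − w_i ≤ ‖x − c_j‖² − w_j. Consequently the Type-1 Bregman Voronoi argmin set {c : ∀ c', D_F(x‖d_c) ≤ D_F(x‖d_{c'})} coincides with the additively-weighted Euclidean Voronoi argmin set for centers c_c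 and weights w_c; in particular each pairwise bisector {x : D_F(x‖d_i) = D_F(x‖d_j)} is an affine hyperplane (when ∇F(d_i) ≠ ∇F(d_j)). -/
open scoped RealInnerProductSpace

/-- Bregman divergence of a differentiable generator `F`:
`D_F(x‖y) = F x − F y − ⟨x − y, ∇F y⟩`. -/
noncomputable def bregman {K : ℕ} (F : EuclideanSpace ℝ (Fin K) → ℝ)
    (x y : EuclideanSpace ℝ (Fin K)) : ℝ :=
  F x - F y - ⟪x - y, gradient F y⟫

/-- Center of the affine (weighted Euclidean) reformulation: `c_c = ∇F(d_c)/2`. -/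
noncomputable def ctr {K M : ℕ} (F : EuclideanSpace ℝ (Fin K) → ℝ)
    (dproto : Fin M → EuclideanSpace ℝ (Fin K)) (c : Fin M) :
    EuclideanSpace ℝ (Fin K) :=
  (1 / 2 : ℝ) • gradient F (dproto c)

/-- Weight of the affine reformulation:
`w_c = ‖∇F(d_c)‖²/4 − a_c` with `a_c = ⟨d_c, ∇F(d_c)⟩ − F(d_c)`. -/
noncomputable def wgt {K M : ℕ} (F : EuclideanSpace ℝ (Fin K) → ℝ)
    (dproto : Fin M → EuclideanSpace ℝ (Fin K)) (c : Fin M) : ℝ :=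
  ‖gradient F (dproto c)‖ ^ 2 / 4 - (⟪dproto c, gradient F (dproto c)⟫ - F (dproto c))

/-!
Expanding the square, `‖x − c_c‖² − w_c = D_F(x‖d_c) + (‖x‖² − F x)`, and the correction does not
depend on `c`, so both families of scores are ordered alike. In a difference of two divergences
`D_F(x‖d_i) − D_F(x‖d_j)` the term `F x` cancels, leaving an affine function of `x` with linear
part `⟨∇F(d_j) − ∇F(d_i), ·⟩`.
-/

section

variable {K : ℕ} (F : EuclideanSpace ℝ (Fin K) → ℝ)

lemma bregman_eq_sub_inner_add (x y : EuclideanSpace ℝ (Fin K)) :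
    bregman F x y = F x - ⟪x, gradient F y⟫ + (⟪y, gradient F y⟫ - F y) := by
  rw [bregman, inner_sub_left]
  ring

lemma bregman_sub_bregman (x y z : EuclideanSpace ℝ (Fin K)) :
    bregman F x y - bregman F x z =
      ⟪gradient F z - gradient F y, x⟫ -
        ((⟪z, gradient F z⟫ - F z) - (⟪y, gradient F y⟫ - F y)) := by
  rw [bregman_eq_sub_inner_add, bregman_eq_sub_inner_add, inner_sub_left,
    real_inner_comm x, real_inner_comm x]
  ring

lemma setOf_bregman_eq_bregman (y z : EuclideanSpace ℝ (Fin K)) :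
    {x | bregman F x y = bregman F x z} =
      {x | ⟪gradient F z - gradient F y, x⟫ =
        (⟪z, gradient F z⟫ - F z) - (⟪y, gradient F y⟫ - F y)} := by
  ext x
  rw [Set.mem_ofPred_eq, Set.mem_ofPred_eq, ← sub_eq_zero, bregman_sub_bregman, sub_eq_zero]

lemma norm_sub_ctr_sq_sub_wgt {M : ℕ} (dproto : Fin M → EuclideanSpace ℝ (Fin K))
    (x : EuclideanSpace ℝ (Fin K)) (c : Fin M) :
    ‖x - ctr F dproto c‖ ^ 2 - wgt F dproto c = bregman F x (dproto c) + (‖x‖ ^ 2 - F x) := by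
  rw [bregman_eq_sub_inner_add, ctr, wgt, norm_sub_sq_real, real_inner_smul_right, norm_smul]
  simp only [Real.norm_eq_abs, abs_of_pos (one_half_pos : (0:ℝ) < 1 / 2)]
  ring

end

theorem bregman_affine_reformulation_general (K M : ℕ)
    (F : EuclideanSpace ℝ (Fin K) → ℝ)
    (dproto : Fin M → EuclideanSpace ℝ (Fin K)) :
    (∀ (x : EuclideanSpace ℝ (Fin K)) (i j : Fin M),
      bregman F x (dproto i) ≤ bregman F x (dproto j) ↔
        ‖x - ctr F dproto i‖ ^ 2 - wgt F dproto i
          ≤ ‖x - ctr F dproto j‖ ^ 2 - wgt F dproto j) ∧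
    (∀ x : EuclideanSpace ℝ (Fin K),
      {c : Fin M | ∀ c', bregman F x (dproto c) ≤ bregman F x (dproto c')} =
      {c : Fin M | ∀ c',
        ‖x - ctr F dproto c‖ ^ 2 - wgt F dproto c
          ≤ ‖x - ctr F dproto c'‖ ^ 2 - wgt F dproto c'}) ∧
    (∀ i j : Fin M, gradient F (dproto i) ≠ gradient F (dproto j) →
      ∃ (v : EuclideanSpace ℝ (Fin K)) (b : ℝ), v ≠ 0 ∧
        {x : EuclideanSpace ℝ (Fin K) |
          bregman F x (dproto i) = bregman F x (dproto j)} =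
        {x : EuclideanSpace ℝ (Fin K) | ⟪v, x⟫ = b}) := by
  have scores_le_iff (x : EuclideanSpace ℝ (Fin K)) (i j : Fin M) :
      bregman F x (dproto i) ≤ bregman F x (dproto j) ↔
        ‖x - ctr F dproto i‖ ^ 2 - wgt F dproto i
          ≤ ‖x - ctr F dproto j‖ ^ 2 - wgt F dproto j := by
    rw [norm_sub_ctr_sq_sub_wgt, norm_sub_ctr_sq_sub_wgt, add_le_add_iff_right]
  refine ⟨scores_le_iff, fun x => Set.ext fun c => forall_congr' (scores_le_iff x c),
    fun i j hij => ⟨_, _, sub_ne_zero.mpr hij.symm, setOf_bregman_eq_bregman F _ _⟩⟩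

/-- **Affine half-space reformulation of Type-1 Bregman Voronoi diagrams.**
For differentiable `F` and prototypes `d_1,…,d_M`:
`D_F(x‖d_i) ≤ D_F(x‖d_j) ↔ ‖x−c_i‖²−w_i ≤ ‖x−c_j‖²−w_j`; hence the Type-1
Bregman Voronoi argmin sets coincide with the additively-weighted Euclidean
Voronoi argmin sets, and each pairwise bisector is an affine hyperplane
whenever `∇F(d_i) ≠ ∇F(d_j)`. -/
theorem bregman_affine_reformulation (K M : ℕ)
    (F : EuclideanSpace ℝ (Fin K) → ℝ) (hF : Differentiable ℝ F)
    (dproto : Fin M → EuclideanSpace ℝ (Fin K)) :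
    (∀ (x : EuclideanSpace ℝ (Fin K)) (i j : Fin M),
      bregman F x (dproto i) ≤ bregman F x (dproto j) ↔
        ‖x - ctr F dproto i‖ ^ 2 - wgt F dproto i
          ≤ ‖x - ctr F dproto j‖ ^ 2 - wgt F dproto j) ∧
    (∀ x : EuclideanSpace ℝ (Fin K),
      {c : Fin M | ∀ c', bregman F x (dproto c) ≤ bregman F x (dproto c')} =
      {c : Fin M | ∀ c',
        ‖x - ctr F dproto c‖ ^ 2 - wgt F dproto c
          ≤ ‖x - ctr F dproto c'‖ ^ 2 - wgt F dproto c'}) ∧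
    (∀ i j : Fin M, gradient F (dproto i) ≠ gradient F (dproto j) →
      ∃ (v : EuclideanSpace ℝ (Fin K)) (b : ℝ), v ≠ 0 ∧
        {x : EuclideanSpace ℝ (Fin K) |
          bregman F x (dproto i) = bregman F x (dproto j)} =
        {x : EuclideanSpace ℝ (Fin K) | ⟪v, x⟫ = b}) :=
  bregman_affine_reformulation_general K M F dproto
end

section
/- Let X and Z be finite types, let μ be a pmf on X, and for each x with μ(x) > 0 let q(·|x) and p(·|x) be pmfs on Z with q(·|x) absolutely continuous with respect to p(·|x). With joints Γ_q(x,z) = μ(x)·q(z|x), Γ_p(x,z) = μ(x)·p(z|x), latent marginals q̄, p̄, and reverse conditionals r_q(x|z) = Γ_q(x,z)/q̄(z), r_p(x|z) = Γ_p(x,z)/p̄(z), define the lifted kernels L_q(z,(x,z')) = r_q(x|z)·q(z'|x) and L_p(z,(x,z')) = r_p(x|z)·p(z'|x) (pmfs on X × Z for each z in the respective supports). Then the lifted average identity holds: Σ_{z : q̄(z)>0} q̄(z)·KL(L_q(z,·) ‖ L_p(z,·)) = 2·Δ̄ − KL(q̄‖p̄), where Δ̄ = Σ_x μ(x)·KL(q(·|x)‖p(·|x)).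 -/
/-- Latent marginal `q̄(z) = Σ_x μ(x)·q(z|x)`. -/
noncomputable def latMarg {X Z : Type*} [Fintype X] (μ : X → ℝ) (q : X → Z → ℝ) :
    Z → ℝ :=
  fun z => ∑ x, μ x * q x z

/-- Reverse conditional `r_q(x|z) = μ(x)·q(z|x)/q̄(z)`. -/
noncomputable def revCond {X Z : Type*} [Fintype X] (μ : X → ℝ) (q : X → Z → ℝ)
    (z : Z) : X → ℝ :=
  fun x => μ x * q x z / latMarg μ q z

/-- Lifted kernel `L_q(z,(x,z')) = r_q(x|z)·q(z'|x)`, a pmf on `X × Z` for each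
`z` in the support of `q̄`. -/
noncomputable def lifted {X Z : Type*} [Fintype X] (μ : X → ℝ) (q : X → Z → ℝ)
    (z : Z) : X × Z → ℝ :=
  fun xz => revCond μ q z xz.1 * q xz.1 xz.2

/-- **Lifted average identity.**
`Σ_{z : q̄(z)>0} q̄(z)·KL(L_q(z,·)‖L_p(z,·)) = 2·Δ̄ − KL(q̄‖p̄)`, where
`Δ̄ = Σ_x μ(x)·KL(q(·|x)‖p(·|x))`. -/
theorem lifted_average_identity
    {X Z : Type*} [Fintype X] [Fintype Z]
    (μ : X → ℝ) (hμ : IsPMF μ) (q p : X → Z → ℝ)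
    (hq : ∀ x, 0 < μ x → IsPMF (q x)) (hp : ∀ x, 0 < μ x → IsPMF (p x))
    (habs : ∀ x, 0 < μ x → ∀ z, p x z = 0 → q x z = 0) :
    (∑ z ∈ Finset.univ.filter (fun z => 0 < latMarg μ q z),
        latMarg μ q z * KL (lifted μ q z) (lifted μ p z))
      = 2 * (∑ x, μ x * KL (q x) (p x)) - KL (latMarg μ q) (latMarg μ p) := by
  classical
  obtain ⟨hμ0, hμ1⟩ := hμ
  have hwq : ∀ x z, 0 ≤ μ x * q x z := by
    intro x z
    rcases (hμ0 x).lt_or_eq with h | h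
    · exact mul_nonneg (hμ0 x) ((hq x h).1 z)
    · simp [← h]
  have hwp : ∀ x z, 0 ≤ μ x * p x z := by
    intro x z
    rcases (hμ0 x).lt_or_eq with h | h
    · exact mul_nonneg (hμ0 x) ((hp x h).1 z)
    · simp [← h]
  have hQ : ∀ z, 0 ≤ latMarg μ q z := fun z => Finset.sum_nonneg fun x _ => hwq x z
  have hP : ∀ z, 0 ≤ latMarg μ p z := fun z => Finset.sum_nonneg fun x _ => hwp x z
  have hQle : ∀ x z, μ x * q x z ≤ latMarg μ q z := fun x z =>
    Finset.single_le_sum (fun i _ => hwq i z) (Finset.mem_univ x)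
  have hPle : ∀ x z, μ x * p x z ≤ latMarg μ p z := fun x z =>
    Finset.single_le_sum (fun i _ => hwp i z) (Finset.mem_univ x)
  -- extend the filtered sum to the full sum
  have hstep0 :
      (∑ z ∈ Finset.univ.filter (fun z => 0 < latMarg μ q z),
          latMarg μ q z * KL (lifted μ q z) (lifted μ p z))
        = ∑ z, latMarg μ q z * KL (lifted μ q z) (lifted μ p z) := by
    refine Finset.sum_subset (Finset.filter_subset _ _) ?_
    intro z _ hz
    have h0 : ¬ (0 < latMarg μ q z) := by simpa using hz
    have : latMarg μ q z = 0 := le_antisymm (not_lt.1 h0) (hQ z)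
    rw [this, zero_mul]
  -- pointwise identity
  have hpt : ∀ z x z',
      latMarg μ q z *
        (lifted μ q z (x, z') * Real.log (lifted μ q z (x, z') / lifted μ p z (x, z')))
      = μ x * q x z * q x z' *
        (Real.log (q x z / p x z) + Real.log (q x z' / p x z')
          + (Real.log (latMarg μ p z) - Real.log (latMarg μ q z))) := by
    intro z x z'
    by_cases hw : μ x * q x z * q x z' = 0
    · rcases mul_eq_zero.1 hw with h | h
      · simp [lifted, revCond, h, hw]
      · simp [lifted, revCond, h, hw]
    · have h1 : μ x * q x z ≠ 0 := fun h => hw (by rw [h, zero_mul])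
      have h2 : q x z' ≠ 0 := fun h => hw (by rw [h, mul_zero])
      have hμx : 0 < μ x := (hμ0 x).lt_of_ne' (fun h => h1 (by rw [h, zero_mul]))
      have hqz : 0 < q x z :=
        ((hq x hμx).1 z).lt_of_ne' (fun h => h1 (by rw [h, mul_zero]))
      have hqz' : 0 < q x z' := ((hq x hμx).1 z').lt_of_ne' h2
      have hpz : 0 < p x z := by
        rcases ((hp x hμx).1 z).lt_or_eq with h | h
        · exact h
        · exact absurd (habs x hμx z h.symm) hqz.ne'
      have hpz' : 0 < p x z' := by
        rcases ((hp x hμx).1 z').lt_or_eq with h | h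
        · exact h
        · exact absurd (habs x hμx z' h.symm) hqz'.ne'
      have hQz : 0 < latMarg μ q z := lt_of_lt_of_le (mul_pos hμx hqz) (hQle x z)
      have hPz : 0 < latMarg μ p z := lt_of_lt_of_le (mul_pos hμx hpz) (hPle x z)
      have e1 : lifted μ q z (x, z') = μ x * q x z / latMarg μ q z * q x z' := rfl
      have e2 : lifted μ p z (x, z') = μ x * p x z / latMarg μ p z * p x z' := rfl
      have harg : lifted μ q z (x, z') / lifted μ p z (x, z')
          = (q x z / p x z) * ((q x z' / p x z') * (latMarg μ p z / latMarg μ q z)) := by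
        rw [e1, e2]
        field_simp
      rw [harg, e1,
        Real.log_mul (div_ne_zero hqz.ne' hpz.ne')
          (mul_ne_zero (div_ne_zero hqz'.ne' hpz'.ne')
            (div_ne_zero hPz.ne' hQz.ne')),
        Real.log_mul (div_ne_zero hqz'.ne' hpz'.ne') (div_ne_zero hPz.ne' hQz.ne'),
        Real.log_div hPz.ne' hQz.ne']
      field_simp
      ring
  rw [hstep0]
  have hLHS : (∑ z, latMarg μ q z * KL (lifted μ q z) (lifted μ p z))
      = ∑ z, ∑ x, ∑ z', μ x * q x z * q x z' *
          (Real.log (q x z / p x z) + Real.log (q x z' / p x z')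
            + (Real.log (latMarg μ p z) - Real.log (latMarg μ q z))) := by
    refine Finset.sum_congr rfl fun z _ => ?_
    rw [KL, Fintype.sum_prod_type, Finset.mul_sum]
    refine Finset.sum_congr rfl fun x _ => ?_
    rw [Finset.mul_sum]
    exact Finset.sum_congr rfl fun z' _ => hpt z x z'
  rw [hLHS]
  -- split the summand into three pieces
  have hsplit : (∑ z, ∑ x, ∑ z', μ x * q x z * q x z' *
          (Real.log (q x z / p x z) + Real.log (q x z' / p x z')
            + (Real.log (latMarg μ p z) - Real.log (latMarg μ q z))))
      = (∑ z, ∑ x, ∑ z', μ x * q x z * q x z' * Real.log (q x z / p x z))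
        + (∑ z, ∑ x, ∑ z', μ x * q x z * q x z' * Real.log (q x z' / p x z'))
        + (∑ z, ∑ x, ∑ z', μ x * q x z * q x z' *
            (Real.log (latMarg μ p z) - Real.log (latMarg μ q z))) := by
    rw [← Finset.sum_add_distrib, ← Finset.sum_add_distrib]
    refine Finset.sum_congr rfl fun z _ => ?_
    rw [← Finset.sum_add_distrib, ← Finset.sum_add_distrib]
    refine Finset.sum_congr rfl fun x _ => ?_
    rw [← Finset.sum_add_distrib, ← Finset.sum_add_distrib]
    refine Finset.sum_congr rfl fun z' _ => ?_
    ring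
  rw [hsplit]
  -- first piece
  have hA : (∑ z, ∑ x, ∑ z', μ x * q x z * q x z' * Real.log (q x z / p x z))
      = ∑ x, μ x * KL (q x) (p x) := by
    rw [Finset.sum_comm]
    refine Finset.sum_congr rfl fun x _ => ?_
    rcases (hμ0 x).lt_or_eq with h | h
    · rw [KL, Finset.mul_sum]
      refine Finset.sum_congr rfl fun z _ => ?_
      have hr : ∀ z', μ x * q x z * q x z' * Real.log (q x z / p x z)
          = (μ x * (q x z * Real.log (q x z / p x z))) * q x z' := fun z' => by ring
      rw [Finset.sum_congr rfl (fun z' _ => hr z'), ← Finset.mul_sum, (hq x h).2, mul_one]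
    · simp [← h]
  -- second piece
  have hB : (∑ z, ∑ x, ∑ z', μ x * q x z * q x z' * Real.log (q x z' / p x z'))
      = ∑ x, μ x * KL (q x) (p x) := by
    rw [Finset.sum_comm]
    refine Finset.sum_congr rfl fun x _ => ?_
    rcases (hμ0 x).lt_or_eq with h | h
    · rw [Finset.sum_comm, KL, Finset.mul_sum]
      refine Finset.sum_congr rfl fun z' _ => ?_
      have hr : ∀ z, μ x * q x z * q x z' * Real.log (q x z' / p x z')
          = (μ x * (q x z' * Real.log (q x z' / p x z'))) * q x z := fun z => by ring
      rw [Finset.sum_congr rfl (fun z _ => hr z), ← Finset.mul_sum, (hq x h).2, mul_one]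
    · simp [← h]
  -- third piece
  have hC : (∑ z, ∑ x, ∑ z', μ x * q x z * q x z' *
          (Real.log (latMarg μ p z) - Real.log (latMarg μ q z)))
      = - KL (latMarg μ q) (latMarg μ p) := by
    have hstep : ∀ z, (∑ x, ∑ z', μ x * q x z * q x z' *
            (Real.log (latMarg μ p z) - Real.log (latMarg μ q z)))
        = latMarg μ q z * (Real.log (latMarg μ p z) - Real.log (latMarg μ q z)) := by
      intro z
      set C := Real.log (latMarg μ p z) - Real.log (latMarg μ q z) with hCdef
      have hlm : latMarg μ q z * C = ∑ x, μ x * q x z * C := Finset.sum_mul _ _ _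
      rw [hlm]
      refine Finset.sum_congr rfl fun x _ => ?_
      rcases (hμ0 x).lt_or_eq with h | h
      · have hr : ∀ z', μ x * q x z * q x z' * C
            = (μ x * q x z * C) * q x z' := fun z' => by ring
        rw [Finset.sum_congr rfl (fun z' _ => hr z'), ← Finset.mul_sum, (hq x h).2, mul_one]
      · simp [← h]
    rw [Finset.sum_congr rfl (fun z _ => hstep z), KL, ← Finset.sum_neg_distrib]
    refine Finset.sum_congr rfl fun z _ => ?_
    by_cases hz : latMarg μ q z = 0
    · simp [hz]
    · have hQz : 0 < latMarg μ q z := (hQ z).lt_of_ne' hz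
      have hPz : 0 < latMarg μ p z := by
        rcases (hP z).lt_or_eq with h | h
        · exact h
        · exfalso
          have hall : ∀ x ∈ Finset.univ, μ x * p x z = 0 :=
            (Finset.sum_eq_zero_iff_of_nonneg (fun x _ => hwp x z)).1 h.symm
          have : latMarg μ q z = 0 := by
            refine Finset.sum_eq_zero fun x _ => ?_
            rcases (hμ0 x).lt_or_eq with hx | hx
            · have hpx : p x z = 0 := by
                have := hall x (Finset.mem_univ x)
                rcases mul_eq_zero.1 this with h' | h'
                · exact absurd h' hx.ne'
                · exact h'
              rw [habs x hx z hpx, mul_zero]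
            · rw [← hx, zero_mul]
          exact hz this
      rw [Real.log_div hQz.ne' hPz.ne']
      ring
  rw [hA, hB, hC]
  ring
end

section
/- Under the setup of the posterior-Gibbs kernels on finite types with both H-step path pmfs P_q^H and P_p^H started from the common initial law q̄, let E ⊆ Z be any subset, and define the horizon-H endpoint rates η_q^{(H)} = Pr_{P_q^H}[z_H ∈ E] and η_p^{(H)} = Pr_{P_p^H}[z_H ∈ E], and the horizon-H agreement A_H = 1 − η_q^{(H)}. Then the finite-horizon binary audit bound holds: d_bin(1 − A_H ‖ η_p^{(H)}) ≤ H·(2·Δ̄ − KL(q̄‖p̄)), where Δ̄ = Σ_x μ(x)·KL(q(·|x)‖p(·|x)). -/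
set_option linter.unusedSectionVars false
set_option linter.unusedVariables false
set_option maxHeartbeats 1000000

open Finset

/-- Posterior-Gibbs kernel `K_q(z,z') = Σ_x r_q(x|z)·q(z'|x)`. -/
noncomputable def gibbsK {X Z : Type*} [Fintype X] (μ : X → ℝ) (q : X → Z → ℝ)
    (z z' : Z) : ℝ :=
  ∑ x, revCond μ q z x * q x z'

/-- `H`-step path pmf on `Z^{H+1}` started from `init` with Markov kernel `Ker`. -/
noncomputable def pathPMF {Z : Type*} (init : Z → ℝ) (Ker : Z → Z → ℝ) (H : ℕ) :
    (Fin (H + 1) → Z) → ℝ :=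
  fun path => init (path 0) * ∏ t : Fin H, Ker (path t.castSucc) (path t.succ)

/-! ### Log-sum inequality -/

lemma logSum {ι : Type*} (s : Finset ι) (a b : ι → ℝ)
    (ha : ∀ i ∈ s, 0 ≤ a i) (hb : ∀ i ∈ s, 0 ≤ b i)
    (hab : ∀ i ∈ s, b i = 0 → a i = 0) :
    (∑ i ∈ s, a i) * Real.log ((∑ i ∈ s, a i) / (∑ i ∈ s, b i)) ≤
      ∑ i ∈ s, a i * Real.log (a i / b i) := by
  set A := ∑ i ∈ s, a i with hA
  set B := ∑ i ∈ s, b i with hB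
  rcases eq_or_lt_of_le (Finset.sum_nonneg hb) with h0 | hBpos
  · have hball : ∀ i ∈ s, b i = 0 := by
      intro i hi
      exact (Finset.sum_eq_zero_iff_of_nonneg hb).1 h0.symm i hi
    have haall : ∀ i ∈ s, a i = 0 := fun i hi => hab i hi (hball i hi)
    have : A = 0 := Finset.sum_eq_zero haall
    rw [this, zero_mul]
    apply Finset.sum_nonneg
    intro i hi
    rw [haall i hi, zero_mul]
  · have key := Real.convexOn_mul_log.map_sum_le (t := s) (w := fun i => b i / B)
      (p := fun i => a i / b i)
      (fun i hi => div_nonneg (hb i hi) hBpos.le)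
      (by rw [← Finset.sum_div]; exact div_self hBpos.ne')
      (fun i hi => by
        rcases eq_or_lt_of_le (hb i hi) with h | h
        · simp [← h]
        · exact Set.mem_Ici.2 (div_nonneg (ha i hi) h.le))
    have hsum : ∑ i ∈ s, (b i / B) • (a i / b i) = A / B := by
      rw [hA, Finset.sum_div]
      refine Finset.sum_congr rfl fun i hi => ?_
      rcases eq_or_lt_of_le (hb i hi) with h | h
      · simp [← h, hab i hi h.symm]
      · rw [smul_eq_mul]
        field_simp
    rw [hsum] at key
    have key2 : B * ((A / B) * Real.log (A / B)) ≤
        B * ∑ i ∈ s, (b i / B) • ((a i / b i) * Real.log (a i / b i)) :=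
      mul_le_mul_of_nonneg_left key hBpos.le
    have hL : B * ((A / B) * Real.log (A / B)) = A * Real.log (A / B) := by
      rw [← mul_assoc, mul_div_cancel₀ _ (hBpos.ne' : B ≠ 0)]
    have hR : B * ∑ i ∈ s, (b i / B) • ((a i / b i) * Real.log (a i / b i)) =
        ∑ i ∈ s, a i * Real.log (a i / b i) := by
      rw [Finset.mul_sum]
      refine Finset.sum_congr rfl fun i hi => ?_
      rcases eq_or_lt_of_le (hb i hi) with h | h
      · have hb0 : b i = 0 := h.symm
        rw [smul_eq_mul, hb0, hab i hi hb0]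
        simp
      · rw [smul_eq_mul]
        rw [← mul_assoc, mul_div_cancel₀ _ (hBpos.ne' : B ≠ 0), ← mul_assoc,
          mul_div_cancel₀ _ h.ne']
    rw [hL, hR] at key2
    exact key2

/-! ### Binary data-processing -/

lemma dbin_le_KL {S : Type*} [Fintype S] [DecidableEq S] (Q P : S → ℝ) (A : Finset S)
    (hQ0 : ∀ s, 0 ≤ Q s) (hP0 : ∀ s, 0 ≤ P s)
    (hQ1 : ∑ s, Q s = 1) (hP1 : ∑ s, P s = 1)
    (hac : ∀ s, P s = 0 → Q s = 0) :
    dbin (∑ s ∈ A, Q s) (∑ s ∈ A, P s) ≤ KL Q P := by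
  have hsplitQ : ∑ s ∈ Aᶜ, Q s = 1 - ∑ s ∈ A, Q s := by
    rw [eq_sub_iff_add_eq, Finset.sum_compl_add_sum]; exact hQ1
  have hsplitP : ∑ s ∈ Aᶜ, P s = 1 - ∑ s ∈ A, P s := by
    rw [eq_sub_iff_add_eq, Finset.sum_compl_add_sum]; exact hP1
  have h1 := logSum A Q P (fun s _ => hQ0 s) (fun s _ => hP0 s) (fun s _ => hac s)
  have h2 := logSum Aᶜ Q P (fun s _ => hQ0 s) (fun s _ => hP0 s) (fun s _ => hac s)
  rw [hsplitQ, hsplitP] at h2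
  have hKL : KL Q P = (∑ s ∈ A, Q s * Real.log (Q s / P s))
      + ∑ s ∈ Aᶜ, Q s * Real.log (Q s / P s) := by
    rw [KL, ← Finset.sum_add_sum_compl A]
  rw [hKL, dbin]
  exact add_le_add h1 h2

/-! ### Basic facts about the Gibbs kernel -/

section Aux
variable {X Z : Type*} [Fintype X] [Fintype Z]
variable {μ : X → ℝ} {q p : X → Z → ℝ}

lemma term_nonneg (hμ : ∀ x, 0 ≤ μ x) (hq : ∀ x, 0 < μ x → IsPMF (q x))
    (x : X) (z : Z) : 0 ≤ μ x * q x z := by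
  rcases eq_or_lt_of_le (hμ x) with h | h
  · rw [← h, zero_mul]
  · exact mul_nonneg h.le ((hq x h).1 z)

lemma latMarg_nonneg (hμ : ∀ x, 0 ≤ μ x) (hq : ∀ x, 0 < μ x → IsPMF (q x))
    (z : Z) : 0 ≤ latMarg μ q z :=
  Finset.sum_nonneg fun x _ => term_nonneg hμ hq x z

lemma latMarg_eq_zero (hμ : ∀ x, 0 ≤ μ x) (hq : ∀ x, 0 < μ x → IsPMF (q x))
    {z : Z} (h : latMarg μ q z = 0) (x : X) : μ x * q x z = 0 :=
  (Finset.sum_eq_zero_iff_of_nonneg (fun x _ => term_nonneg hμ hq x z)).1 h x (mem_univ x)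

lemma revCond_def (z : Z) (x : X) :
    revCond μ q z x = μ x * q x z / latMarg μ q z := rfl

lemma bar_mul_rev (hμ : ∀ x, 0 ≤ μ x) (hq : ∀ x, 0 < μ x → IsPMF (q x))
    (z : Z) (x : X) : latMarg μ q z * revCond μ q z x = μ x * q x z := by
  rcases eq_or_ne (latMarg μ q z) 0 with h | h
  · rw [h, zero_mul, latMarg_eq_zero hμ hq h x]
  · rw [revCond_def, mul_div_cancel₀ _ h]

lemma revCond_nonneg (hμ : ∀ x, 0 ≤ μ x) (hq : ∀ x, 0 < μ x → IsPMF (q x))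
    (z : Z) (x : X) : 0 ≤ revCond μ q z x :=
  div_nonneg (term_nonneg hμ hq x z) (latMarg_nonneg hμ hq z)

lemma revCond_mul_nonneg (hμ : ∀ x, 0 ≤ μ x) (hq : ∀ x, 0 < μ x → IsPMF (q x))
    (z z' : Z) (x : X) : 0 ≤ revCond μ q z x * q x z' := by
  rcases eq_or_lt_of_le (hμ x) with h | h
  · have : revCond μ q z x = 0 := by rw [revCond_def, ← h, zero_mul, zero_div]
    rw [this, zero_mul]
  · exact mul_nonneg (revCond_nonneg hμ hq z x) ((hq x h).1 z')

lemma gibbsK_nonneg (hμ : ∀ x, 0 ≤ μ x) (hq : ∀ x, 0 < μ x → IsPMF (q x))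
    (z z' : Z) : 0 ≤ gibbsK μ q z z' :=
  Finset.sum_nonneg fun x _ => revCond_mul_nonneg hμ hq z z' x

lemma revCond_sum (hμ : ∀ x, 0 ≤ μ x) (hq : ∀ x, 0 < μ x → IsPMF (q x))
    {z : Z} (h : 0 < latMarg μ q z) : ∑ x, revCond μ q z x = 1 := by
  simp only [revCond_def]
  rw [← Finset.sum_div, ← latMarg, div_self h.ne']

lemma gibbsK_row_sum (hμ : ∀ x, 0 ≤ μ x) (hq : ∀ x, 0 < μ x → IsPMF (q x))
    {z : Z} (h : 0 < latMarg μ q z) : ∑ z', gibbsK μ q z z' = 1 := by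
  rw [show ∑ z', gibbsK μ q z z' = ∑ z', ∑ x, revCond μ q z x * q x z' from rfl,
    Finset.sum_comm]
  rw [← revCond_sum hμ hq h]
  refine Finset.sum_congr rfl fun x _ => ?_
  rw [← Finset.mul_sum]
  rcases eq_or_lt_of_le (hμ x) with hx | hx
  · have : revCond μ q z x = 0 := by rw [revCond_def, ← hx, zero_mul, zero_div]
    rw [this, zero_mul]
  · rw [(hq x hx).2, mul_one]

lemma gibbsK_pos_elim (hμ : ∀ x, 0 ≤ μ x) (hq : ∀ x, 0 < μ x → IsPMF (q x))
    {z z' : Z} (h : gibbsK μ q z z' ≠ 0) :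
    ∃ x, 0 < μ x ∧ q x z ≠ 0 ∧ 0 < q x z' := by
  have : ∃ x, revCond μ q z x * q x z' ≠ 0 := by
    by_contra hc
    push_neg at hc
    exact h (Finset.sum_eq_zero fun x _ => hc x)
  obtain ⟨x, hx⟩ := this
  have hμx : 0 < μ x := by
    rcases eq_or_lt_of_le (hμ x) with h0 | h0
    · exfalso; apply hx; rw [revCond_def, ← h0, zero_mul, zero_div, zero_mul]
    · exact h0
  have hqz : q x z ≠ 0 := by
    intro h0
    apply hx
    rw [revCond_def, h0, mul_zero, zero_div, zero_mul]
  have hqz' : q x z' ≠ 0 := fun h0 => hx (by rw [h0, mul_zero])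
  exact ⟨x, hμx, hqz, lt_of_le_of_ne ((hq x hμx).1 z') (Ne.symm hqz')⟩

lemma latMarg_pos_of_term (hμ : ∀ x, 0 ≤ μ x) (hq : ∀ x, 0 < μ x → IsPMF (q x))
    {x : X} {z : Z} (h : 0 < μ x * q x z) : 0 < latMarg μ q z :=
  lt_of_lt_of_le h (Finset.single_le_sum (fun x _ => term_nonneg hμ hq x z) (mem_univ x))

lemma gibbsK_support (hμ : ∀ x, 0 ≤ μ x) (hq : ∀ x, 0 < μ x → IsPMF (q x))
    {z z' : Z} (h : gibbsK μ q z z' ≠ 0) : 0 < latMarg μ q z' := by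
  obtain ⟨x, hμx, _, hqz'⟩ := gibbsK_pos_elim hμ hq h
  exact latMarg_pos_of_term hμ hq (mul_pos hμx hqz')

lemma latMarg_pos_elim (hμ : ∀ x, 0 ≤ μ x) (hq : ∀ x, 0 < μ x → IsPMF (q x))
    {z : Z} (h : 0 < latMarg μ q z) : ∃ x, 0 < μ x ∧ 0 < q x z := by
  have : ∃ x, μ x * q x z ≠ 0 := by
    by_contra hc
    push_neg at hc
    rw [latMarg] at h
    rw [Finset.sum_eq_zero (fun x _ => hc x)] at h
    exact lt_irrefl 0 h
  obtain ⟨x, hx⟩ := this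
  have hμx : 0 < μ x := by
    rcases eq_or_lt_of_le (hμ x) with h0 | h0
    · exact absurd (by rw [← h0, zero_mul]) hx
    · exact h0
  have := (hq x hμx).1 z
  refine ⟨x, hμx, lt_of_le_of_ne this fun h0 => hx ?_⟩
  rw [← h0, mul_zero]

lemma latMarg_ac (hμ : ∀ x, 0 ≤ μ x) (hq : ∀ x, 0 < μ x → IsPMF (q x))
    (hp : ∀ x, 0 < μ x → IsPMF (p x))
    (habs : ∀ x, 0 < μ x → ∀ z, p x z = 0 → q x z = 0)
    {z : Z} (h : 0 < latMarg μ q z) : 0 < latMarg μ p z := by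
  obtain ⟨x, hμx, hqz⟩ := latMarg_pos_elim hμ hq h
  have hpz : 0 < p x z := by
    rcases eq_or_lt_of_le ((hp x hμx).1 z) with h0 | h0
    · exact absurd (habs x hμx z h0.symm) hqz.ne'
    · exact h0
  exact latMarg_pos_of_term hμ hp (mul_pos hμx hpz)

lemma gibbsK_ac (hμ : ∀ x, 0 ≤ μ x) (hq : ∀ x, 0 < μ x → IsPMF (q x))
    (hp : ∀ x, 0 < μ x → IsPMF (p x))
    (habs : ∀ x, 0 < μ x → ∀ z, p x z = 0 → q x z = 0)
    {z z' : Z} (h : gibbsK μ q z z' ≠ 0) :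
    0 < gibbsK μ p z z' := by
  obtain ⟨x, hμx, hqz, hqz'⟩ := gibbsK_pos_elim hμ hq h
  have hpz : 0 < p x z := by
    rcases eq_or_lt_of_le ((hp x hμx).1 z) with h0 | h0
    · exact absurd (habs x hμx z h0.symm) hqz
    · exact h0
  have hpz' : 0 < p x z' := by
    rcases eq_or_lt_of_le ((hp x hμx).1 z') with h0 | h0
    · exact absurd (habs x hμx z' h0.symm) hqz'.ne'
    · exact h0
  have hpbar : 0 < latMarg μ p z := latMarg_pos_of_term hμ hp (mul_pos hμx hpz)
  have hterm : 0 < revCond μ p z x * p x z' :=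
    mul_pos (div_pos (mul_pos hμx hpz) hpbar) hpz'
  exact lt_of_lt_of_le hterm
    (Finset.single_le_sum (fun x _ => revCond_mul_nonneg hμ hp z z' x) (mem_univ x))

lemma latMarg_sum_one (hμT : IsPMF μ) (hq : ∀ x, 0 < μ x → IsPMF (q x)) :
    ∑ z, latMarg μ q z = 1 := by
  rw [show ∑ z, latMarg μ q z = ∑ z, ∑ x, μ x * q x z from rfl, Finset.sum_comm]
  rw [← hμT.2]
  refine Finset.sum_congr rfl fun x _ => ?_
  rw [← Finset.mul_sum]
  rcases eq_or_lt_of_le (hμT.1 x) with hx | hx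
  · rw [← hx]; simp
  · rw [(hq x hx).2, mul_one]

lemma stationary (hμ : ∀ x, 0 ≤ μ x) (hq : ∀ x, 0 < μ x → IsPMF (q x))
    (z' : Z) : ∑ z, latMarg μ q z * gibbsK μ q z z' = latMarg μ q z' := by
  have step : ∀ z, latMarg μ q z * gibbsK μ q z z' = ∑ x, (μ x * q x z) * q x z' := by
    intro z
    rw [gibbsK, Finset.mul_sum]
    refine Finset.sum_congr rfl fun x _ => ?_
    rw [← mul_assoc, bar_mul_rev hμ hq]
  simp only [step]
  rw [Finset.sum_comm, latMarg]
  refine Finset.sum_congr rfl fun x _ => ?_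
  have : ∑ z, μ x * q x z * q x z' = (∑ z, μ x * q x z) * q x z' := by
    rw [Finset.sum_mul]
  rw [this]
  rcases eq_or_lt_of_le (hμ x) with hx | hx
  · simp [← hx]
  · have : ∑ z, μ x * q x z = μ x := by
      rw [← Finset.mul_sum, (hq x hx).2, mul_one]
    rw [this]

end Aux

/-! ### Path pmf basics -/

section Path
variable {Z : Type*} [Fintype Z]

def snocEquiv (Z : Type*) (H : ℕ) : ((Fin (H + 1) → Z) × Z) ≃ (Fin (H + 2) → Z) where
  toFun fz := Fin.snoc fz.1 fz.2
  invFun g := (fun i => g i.castSucc, g (Fin.last (H + 1)))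
  left_inv fz := by
    ext i
    · simp
    · simp
  right_inv g := by
    funext i
    refine Fin.lastCases ?_ (fun j => ?_) i
    · simp
    · simp

lemma sum_snoc (H : ℕ) (F : (Fin (H + 2) → Z) → ℝ) :
    ∑ g : Fin (H + 2) → Z, F g =
      ∑ f : Fin (H + 1) → Z, ∑ z : Z, F (Fin.snoc f z) := by
  rw [← Equiv.sum_comp (snocEquiv Z H) F, Fintype.sum_prod_type]
  rfl

lemma pathPMF_zero (init : Z → ℝ) (Ker : Z → Z → ℝ) (f : Fin 1 → Z) :
    pathPMF init Ker 0 f = init (f 0) := by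
  simp [pathPMF]

lemma pathPMF_snoc (init : Z → ℝ) (Ker : Z → Z → ℝ) (H : ℕ)
    (f : Fin (H + 1) → Z) (z : Z) :
    pathPMF init Ker (H + 1) (Fin.snoc f z) =
      pathPMF init Ker H f * Ker (f (Fin.last H)) z := by
  rw [pathPMF, pathPMF]
  have h0 : (Fin.snoc f z : Fin (H + 2) → Z) 0 = f 0 := by
    have : (0 : Fin (H + 2)) = Fin.castSucc (0 : Fin (H + 1)) := rfl
    rw [this, Fin.snoc_castSucc]
  rw [h0, Fin.prod_univ_castSucc]
  have h1 : ∀ t : Fin H,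
      Ker ((Fin.snoc f z : Fin (H+2) → Z) (t.castSucc).castSucc)
        ((Fin.snoc f z : Fin (H+2) → Z) (t.castSucc).succ)
        = Ker (f t.castSucc) (f t.succ) := by
    intro t
    rw [Fin.succ_castSucc, Fin.snoc_castSucc, Fin.snoc_castSucc]
  have h2 : Ker ((Fin.snoc f z : Fin (H+2) → Z) (Fin.last H).castSucc)
      ((Fin.snoc f z : Fin (H+2) → Z) (Fin.last H).succ)
      = Ker (f (Fin.last H)) z := by
    rw [Fin.snoc_castSucc, Fin.succ_last, Fin.snoc_last]
  simp only [h1, h2]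
  ring

lemma pathPMF_nonneg {init : Z → ℝ} {K : Z → Z → ℝ}
    (hi : ∀ z, 0 ≤ init z) (hK : ∀ z z', 0 ≤ K z z') (H : ℕ) (f : Fin (H+1) → Z) :
    0 ≤ pathPMF init K H f :=
  mul_nonneg (hi _) (Finset.prod_nonneg fun t _ => hK _ _)

lemma pathPMF_factors {init : Z → ℝ} {K : Z → Z → ℝ} {H : ℕ} {f : Fin (H+1) → Z}
    (h : pathPMF init K H f ≠ 0) :
    init (f 0) ≠ 0 ∧ ∀ t : Fin H, K (f t.castSucc) (f t.succ) ≠ 0 := by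
  rw [pathPMF] at h
  obtain ⟨h1, h2⟩ := mul_ne_zero_iff.1 h
  exact ⟨h1, fun t => Finset.prod_ne_zero_iff.1 h2 t (mem_univ t)⟩

end Path

/-! ### The two chains -/

section Chains
variable {X Z : Type*} [Fintype X] [Fintype Z]
variable {μ : X → ℝ} {q p : X → Z → ℝ}

lemma path_support_q (hμ : ∀ x, 0 ≤ μ x) (hq : ∀ x, 0 < μ x → IsPMF (q x))
    {H : ℕ} {f : Fin (H+1) → Z}
    (h : pathPMF (latMarg μ q) (gibbsK μ q) H f ≠ 0) (t : Fin (H+1)) :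
    0 < latMarg μ q (f t) := by
  obtain ⟨h1, h2⟩ := pathPMF_factors h
  refine Fin.cases ?_ (fun j => ?_) t
  · exact lt_of_le_of_ne (latMarg_nonneg hμ hq _) (Ne.symm h1)
  · exact gibbsK_support hμ hq (h2 j)

lemma path_support_p (hμ : ∀ x, 0 ≤ μ x) (hq : ∀ x, 0 < μ x → IsPMF (q x))
    (hp : ∀ x, 0 < μ x → IsPMF (p x))
    (habs : ∀ x, 0 < μ x → ∀ z, p x z = 0 → q x z = 0)
    {H : ℕ} {f : Fin (H+1) → Z}
    (h : pathPMF (latMarg μ q) (gibbsK μ p) H f ≠ 0) (t : Fin (H+1)) :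
    0 < latMarg μ p (f t) := by
  obtain ⟨h1, h2⟩ := pathPMF_factors h
  refine Fin.cases ?_ (fun j => ?_) t
  · exact latMarg_ac hμ hq hp habs
      (lt_of_le_of_ne (latMarg_nonneg hμ hq _) (Ne.symm h1))
  · exact gibbsK_support hμ hp (h2 j)

lemma path_ac (hμ : ∀ x, 0 ≤ μ x) (hq : ∀ x, 0 < μ x → IsPMF (q x))
    (hp : ∀ x, 0 < μ x → IsPMF (p x))
    (habs : ∀ x, 0 < μ x → ∀ z, p x z = 0 → q x z = 0)
    {H : ℕ} {f : Fin (H+1) → Z}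
    (h : pathPMF (latMarg μ q) (gibbsK μ q) H f ≠ 0) :
    0 < pathPMF (latMarg μ q) (gibbsK μ p) H f := by
  obtain ⟨h1, h2⟩ := pathPMF_factors h
  show 0 < latMarg μ q (f 0) * ∏ t : Fin H, gibbsK μ p (f t.castSucc) (f t.succ)
  refine mul_pos (lt_of_le_of_ne (latMarg_nonneg hμ hq _) (Ne.symm h1))
    (Finset.prod_pos fun t _ => ?_)
  exact gibbsK_ac hμ hq hp habs (h2 t)

lemma marg (hμ : ∀ x, 0 ≤ μ x) (hq : ∀ x, 0 < μ x → IsPMF (q x)) (H : ℕ) :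
    ∀ g : Z → ℝ,
      ∑ f : Fin (H+1) → Z,
        pathPMF (latMarg μ q) (gibbsK μ q) H f * g (f (Fin.last H))
      = ∑ z, latMarg μ q z * g z := by
  induction H with
  | zero =>
    intro g
    rw [← Equiv.sum_comp (Equiv.funUnique (Fin 1) Z).symm
      (fun f => pathPMF (latMarg μ q) (gibbsK μ q) 0 f * g (f (Fin.last 0)))]
    refine Finset.sum_congr rfl fun z _ => ?_
    simp [pathPMF]
  | succ H IH =>
    intro g
    rw [sum_snoc]
    have hstep : ∀ f : Fin (H+1) → Z,
        ∑ z, pathPMF (latMarg μ q) (gibbsK μ q) (H+1) (Fin.snoc f z) *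
            g ((Fin.snoc f z : Fin (H+2) → Z) (Fin.last (H+1)))
        = pathPMF (latMarg μ q) (gibbsK μ q) H f *
            ∑ z, gibbsK μ q (f (Fin.last H)) z * g z := by
      intro f
      rw [Finset.mul_sum]
      refine Finset.sum_congr rfl fun z _ => ?_
      rw [pathPMF_snoc, Fin.snoc_last]
      ring
    rw [Finset.sum_congr rfl fun f _ => hstep f,
      IH (fun z => ∑ z', gibbsK μ q z z' * g z')]
    have hswap : ∑ z, latMarg μ q z * ∑ z', gibbsK μ q z z' * g z'
        = ∑ z', (∑ z, latMarg μ q z * gibbsK μ q z z') * g z' := by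
      simp only [Finset.mul_sum, Finset.sum_mul]
      rw [Finset.sum_comm]
      refine Finset.sum_congr rfl fun z' _ => Finset.sum_congr rfl fun z _ => by ring
    rw [hswap]
    refine Finset.sum_congr rfl fun z' _ => ?_
    rw [stationary hμ hq]

lemma pathPMF_q_sum (hμT : IsPMF μ) (hq : ∀ x, 0 < μ x → IsPMF (q x)) (H : ℕ) :
    ∑ f : Fin (H+1) → Z, pathPMF (latMarg μ q) (gibbsK μ q) H f = 1 := by
  have := marg (μ := μ) (q := q) hμT.1 hq H (fun _ => 1)
  simp only [mul_one] at this
  rw [this, latMarg_sum_one hμT hq]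

lemma pathPMF_p_sum (hμT : IsPMF μ) (hq : ∀ x, 0 < μ x → IsPMF (q x))
    (hp : ∀ x, 0 < μ x → IsPMF (p x))
    (habs : ∀ x, 0 < μ x → ∀ z, p x z = 0 → q x z = 0) (H : ℕ) :
    ∑ f : Fin (H+1) → Z, pathPMF (latMarg μ q) (gibbsK μ p) H f = 1 := by
  induction H with
  | zero =>
    rw [← Equiv.sum_comp (Equiv.funUnique (Fin 1) Z).symm
      (fun f => pathPMF (latMarg μ q) (gibbsK μ p) 0 f)]
    have : ∀ z : Z, pathPMF (latMarg μ q) (gibbsK μ p) 0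
        ((Equiv.funUnique (Fin 1) Z).symm z) = latMarg μ q z := by
      intro z
      simp [pathPMF]
    rw [Finset.sum_congr rfl fun z _ => this z, latMarg_sum_one hμT hq]
  | succ H IH =>
    rw [sum_snoc]
    have hstep : ∀ f : Fin (H+1) → Z,
        ∑ z, pathPMF (latMarg μ q) (gibbsK μ p) (H+1) (Fin.snoc f z)
        = pathPMF (latMarg μ q) (gibbsK μ p) H f := by
      intro f
      have : ∀ z, pathPMF (latMarg μ q) (gibbsK μ p) (H+1) (Fin.snoc f z)
          = pathPMF (latMarg μ q) (gibbsK μ p) H f * gibbsK μ p (f (Fin.last H)) z :=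
        fun z => pathPMF_snoc _ _ _ _ _
      rw [Finset.sum_congr rfl fun z _ => this z, ← Finset.mul_sum]
      rcases eq_or_ne (pathPMF (latMarg μ q) (gibbsK μ p) H f) 0 with h0 | h0
      · rw [h0, zero_mul]
      · rw [gibbsK_row_sum hμT.1 hp
          (path_support_p hμT.1 hq hp habs h0 (Fin.last H)), mul_one]
    rw [Finset.sum_congr rfl fun f _ => hstep f, IH]

end Chains
section Chains2
variable {X Z : Type*} [Fintype X] [Fintype Z]
variable {μ : X → ℝ} {q p : X → Z → ℝ}

lemma chain_step (hμ : ∀ x, 0 ≤ μ x) (hq : ∀ x, 0 < μ x → IsPMF (q x))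
    (hp : ∀ x, 0 < μ x → IsPMF (p x))
    (habs : ∀ x, 0 < μ x → ∀ z, p x z = 0 → q x z = 0) (H : ℕ) :
    KL (pathPMF (latMarg μ q) (gibbsK μ q) (H+1)) (pathPMF (latMarg μ q) (gibbsK μ p) (H+1))
      = KL (pathPMF (latMarg μ q) (gibbsK μ q) H) (pathPMF (latMarg μ q) (gibbsK μ p) H)
        + ∑ z, latMarg μ q z * KL (gibbsK μ q z) (gibbsK μ p z) := by
  have hterm : ∀ (f : Fin (H+1) → Z) (z : Z),
      pathPMF (latMarg μ q) (gibbsK μ q) (H+1) (Fin.snoc f z) *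
        Real.log (pathPMF (latMarg μ q) (gibbsK μ q) (H+1) (Fin.snoc f z) /
          pathPMF (latMarg μ q) (gibbsK μ p) (H+1) (Fin.snoc f z))
      = gibbsK μ q (f (Fin.last H)) z *
          (pathPMF (latMarg μ q) (gibbsK μ q) H f *
            Real.log (pathPMF (latMarg μ q) (gibbsK μ q) H f /
              pathPMF (latMarg μ q) (gibbsK μ p) H f))
        + pathPMF (latMarg μ q) (gibbsK μ q) H f *
            (gibbsK μ q (f (Fin.last H)) z *
              Real.log (gibbsK μ q (f (Fin.last H)) z / gibbsK μ p (f (Fin.last H)) z)) := by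
    intro f z
    rw [pathPMF_snoc, pathPMF_snoc]
    rcases eq_or_ne (pathPMF (latMarg μ q) (gibbsK μ q) H f) 0 with h1 | h1
    · rw [h1]; simp
    rcases eq_or_ne (gibbsK μ q (f (Fin.last H)) z) 0 with h2 | h2
    · rw [h2]; simp
    have hPq : 0 < pathPMF (latMarg μ q) (gibbsK μ q) H f :=
      lt_of_le_of_ne (pathPMF_nonneg (latMarg_nonneg hμ hq) (gibbsK_nonneg hμ hq) H f)
        (Ne.symm h1)
    have hPp : 0 < pathPMF (latMarg μ q) (gibbsK μ p) H f := path_ac hμ hq hp habs h1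
    have hKq : 0 < gibbsK μ q (f (Fin.last H)) z :=
      lt_of_le_of_ne (gibbsK_nonneg hμ hq _ _) (Ne.symm h2)
    have hKp : 0 < gibbsK μ p (f (Fin.last H)) z := gibbsK_ac hμ hq hp habs h2
    rw [mul_div_mul_comm, Real.log_mul (div_pos hPq hPp).ne' (div_pos hKq hKp).ne']
    ring
  rw [KL, sum_snoc]
  rw [Finset.sum_congr rfl fun f _ =>
    Finset.sum_congr rfl fun z _ => hterm f z]
  have hsplit : ∀ f : Fin (H+1) → Z, (∑ z : Z,
      (gibbsK μ q (f (Fin.last H)) z *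
          (pathPMF (latMarg μ q) (gibbsK μ q) H f *
            Real.log (pathPMF (latMarg μ q) (gibbsK μ q) H f /
              pathPMF (latMarg μ q) (gibbsK μ p) H f))
        + pathPMF (latMarg μ q) (gibbsK μ q) H f *
            (gibbsK μ q (f (Fin.last H)) z *
              Real.log (gibbsK μ q (f (Fin.last H)) z / gibbsK μ p (f (Fin.last H)) z))))
      = pathPMF (latMarg μ q) (gibbsK μ q) H f *
          Real.log (pathPMF (latMarg μ q) (gibbsK μ q) H f /
            pathPMF (latMarg μ q) (gibbsK μ p) H f)
        + pathPMF (latMarg μ q) (gibbsK μ q) H f *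
            KL (gibbsK μ q (f (Fin.last H))) (gibbsK μ p (f (Fin.last H))) := by
    intro f
    rw [Finset.sum_add_distrib]
    congr 1
    · rw [← Finset.sum_mul]
      rcases eq_or_ne (pathPMF (latMarg μ q) (gibbsK μ q) H f) 0 with h1 | h1
      · rw [h1]; simp
      · rw [gibbsK_row_sum hμ hq (path_support_q hμ hq h1 (Fin.last H)), one_mul]
    · rw [← Finset.mul_sum]
      rfl
  rw [Finset.sum_congr rfl fun f _ => hsplit f, Finset.sum_add_distrib]
  congr 1
  exact marg hμ hq H (fun z => KL (gibbsK μ q z) (gibbsK μ p z))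

lemma KL_path (hμ : ∀ x, 0 ≤ μ x) (hq : ∀ x, 0 < μ x → IsPMF (q x))
    (hp : ∀ x, 0 < μ x → IsPMF (p x))
    (habs : ∀ x, 0 < μ x → ∀ z, p x z = 0 → q x z = 0) (H : ℕ) :
    KL (pathPMF (latMarg μ q) (gibbsK μ q) H) (pathPMF (latMarg μ q) (gibbsK μ p) H)
      = (H : ℝ) * ∑ z, latMarg μ q z * KL (gibbsK μ q z) (gibbsK μ p z) := by
  induction H with
  | zero =>
    rw [Nat.cast_zero, zero_mul, KL]
    refine Finset.sum_eq_zero fun f _ => ?_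
    rw [pathPMF_zero, pathPMF_zero]
    rcases eq_or_ne (latMarg μ q (f 0)) 0 with h0 | h0
    · rw [h0, zero_mul]
    · rw [div_self h0, Real.log_one, mul_zero]
  | succ H IH =>
    rw [chain_step hμ hq hp habs H, IH]
    push_cast
    ring

end Chains2
section StepBound
variable {X Z : Type*} [Fintype X] [Fintype Z]
variable {μ : X → ℝ} {q p : X → Z → ℝ}

lemma perz_bound (hμ : ∀ x, 0 ≤ μ x) (hq : ∀ x, 0 < μ x → IsPMF (q x))
    (hp : ∀ x, 0 < μ x → IsPMF (p x))
    (habs : ∀ x, 0 < μ x → ∀ z, p x z = 0 → q x z = 0)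
    {z : Z} (hz : 0 < latMarg μ q z) :
    KL (gibbsK μ q z) (gibbsK μ p z)
      ≤ ∑ x, (revCond μ q z x * Real.log (revCond μ q z x / revCond μ p z x)
          + revCond μ q z x * KL (q x) (p x)) := by
  have hpz : 0 < latMarg μ p z := latMarg_ac hμ hq hp habs hz
  have h1 : ∀ z', gibbsK μ q z z' * Real.log (gibbsK μ q z z' / gibbsK μ p z z')
      ≤ ∑ x, (revCond μ q z x * q x z') *
          Real.log ((revCond μ q z x * q x z') / (revCond μ p z x * p x z')) := by
    intro z'
    have hab : ∀ x ∈ univ, revCond μ p z x * p x z' = 0 →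
        revCond μ q z x * q x z' = 0 := by
      intro x _ hb
      rcases eq_or_lt_of_le (hμ x) with hμx | hμx
      · rw [revCond_def, ← hμx, zero_mul, zero_div, zero_mul]
      rcases mul_eq_zero.1 hb with hb1 | hb1
      · rw [revCond_def] at hb1
        rcases div_eq_zero_iff.1 hb1 with hb2 | hb2
        · rcases mul_eq_zero.1 hb2 with hb3 | hb3
          · exact absurd hb3 hμx.ne'
          · have : q x z = 0 := habs x hμx z hb3
            rw [revCond_def, this, mul_zero, zero_div, zero_mul]
        · exact absurd hb2 hpz.ne'
      · have : q x z' = 0 := habs x hμx z' hb1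
        rw [this, mul_zero]
    exact logSum univ (fun x => revCond μ q z x * q x z')
      (fun x => revCond μ p z x * p x z')
      (fun x _ => revCond_mul_nonneg hμ hq z z' x)
      (fun x _ => revCond_mul_nonneg hμ hp z z' x) hab
  have h2 : ∀ x, (∑ z', (revCond μ q z x * q x z') *
        Real.log ((revCond μ q z x * q x z') / (revCond μ p z x * p x z')))
      = revCond μ q z x * Real.log (revCond μ q z x / revCond μ p z x)
        + revCond μ q z x * KL (q x) (p x) := by
    intro x
    rcases eq_or_ne (revCond μ q z x) 0 with h0 | h0
    · simp [h0]
    have hnum : μ x * q x z ≠ 0 := by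
      intro h
      exact h0 (by rw [revCond_def, h, zero_div])
    have hμx : 0 < μ x := by
      rcases eq_or_lt_of_le (hμ x) with h | h
      · exact absurd (by rw [← h, zero_mul]) hnum
      · exact h
    have hqxz : 0 < q x z := by
      rcases eq_or_lt_of_le ((hq x hμx).1 z) with h | h
      · exact absurd (by rw [← h, mul_zero]) hnum
      · exact h
    have hpxz : 0 < p x z := by
      rcases eq_or_lt_of_le ((hp x hμx).1 z) with h | h
      · exact absurd (habs x hμx z h.symm) hqxz.ne'
      · exact h
    have hrq : 0 < revCond μ q z x := by
      rw [revCond_def]; exact div_pos (mul_pos hμx hqxz) hz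
    have hrp : 0 < revCond μ p z x := by
      rw [revCond_def]; exact div_pos (mul_pos hμx hpxz) hpz
    have key : ∀ z', (revCond μ q z x * q x z') *
        Real.log ((revCond μ q z x * q x z') / (revCond μ p z x * p x z'))
        = revCond μ q z x * q x z' *
            Real.log (revCond μ q z x / revCond μ p z x)
          + revCond μ q z x * (q x z' * Real.log (q x z' / p x z')) := by
      intro z'
      rcases eq_or_lt_of_le ((hq x hμx).1 z') with hq0 | hq0
      · rw [← hq0]; simp
      · have hp0 : 0 < p x z' := by
          rcases eq_or_lt_of_le ((hp x hμx).1 z') with h | h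
          · exact absurd (habs x hμx z' h.symm) hq0.ne'
          · exact h
        rw [mul_div_mul_comm, Real.log_mul (div_pos hrq hrp).ne' (div_pos hq0 hp0).ne']
        ring
    rw [Finset.sum_congr rfl fun z' _ => key z', Finset.sum_add_distrib]
    congr 1
    · calc ∑ z', revCond μ q z x * q x z' *
            Real.log (revCond μ q z x / revCond μ p z x)
          = (∑ z', q x z') * (revCond μ q z x *
              Real.log (revCond μ q z x / revCond μ p z x)) := by
            rw [Finset.sum_mul]
            exact Finset.sum_congr rfl fun z' _ => by ring
        _ = revCond μ q z x * Real.log (revCond μ q z x / revCond μ p z x) := by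
            rw [(hq x hμx).2, one_mul]
    · rw [← Finset.mul_sum]
      rfl
  calc KL (gibbsK μ q z) (gibbsK μ p z)
      ≤ ∑ z', ∑ x, (revCond μ q z x * q x z') *
          Real.log ((revCond μ q z x * q x z') / (revCond μ p z x * p x z')) :=
        Finset.sum_le_sum fun z' _ => h1 z'
    _ = ∑ x, ∑ z', (revCond μ q z x * q x z') *
          Real.log ((revCond μ q z x * q x z') / (revCond μ p z x * p x z')) :=
        Finset.sum_comm
    _ = _ := Finset.sum_congr rfl fun x _ => h2 x

lemma step_bound (hμ : ∀ x, 0 ≤ μ x) (hq : ∀ x, 0 < μ x → IsPMF (q x))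
    (hp : ∀ x, 0 < μ x → IsPMF (p x))
    (habs : ∀ x, 0 < μ x → ∀ z, p x z = 0 → q x z = 0) :
    ∑ z, latMarg μ q z * KL (gibbsK μ q z) (gibbsK μ p z)
      ≤ 2 * (∑ x, μ x * KL (q x) (p x)) - KL (latMarg μ q) (latMarg μ p) := by
  have hle : ∑ z, latMarg μ q z * KL (gibbsK μ q z) (gibbsK μ p z)
      ≤ ∑ z, ∑ x,
          (latMarg μ q z * (revCond μ q z x *
              Real.log (revCond μ q z x / revCond μ p z x))
            + latMarg μ q z * (revCond μ q z x * KL (q x) (p x))) := by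
    refine Finset.sum_le_sum fun z _ => ?_
    rcases eq_or_lt_of_le (latMarg_nonneg hμ hq z) with h0 | h0
    · rw [← h0]; simp
    · calc latMarg μ q z * KL (gibbsK μ q z) (gibbsK μ p z)
          ≤ latMarg μ q z * ∑ x,
              (revCond μ q z x * Real.log (revCond μ q z x / revCond μ p z x)
                + revCond μ q z x * KL (q x) (p x)) :=
            mul_le_mul_of_nonneg_left (perz_bound hμ hq hp habs h0) h0.le
        _ = _ := by
            rw [Finset.mul_sum]
            exact Finset.sum_congr rfl fun x _ => by ring
  refine hle.trans (le_of_eq ?_)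
  rw [Finset.sum_congr rfl fun (z : Z) _ => Finset.sum_add_distrib
    (f := fun x => latMarg μ q z * (revCond μ q z x *
      Real.log (revCond μ q z x / revCond μ p z x)))
    (g := fun x => latMarg μ q z * (revCond μ q z x * KL (q x) (p x))),
    Finset.sum_add_distrib]
  -- second piece = Δ
  have hB : ∑ z, ∑ x, latMarg μ q z * (revCond μ q z x * KL (q x) (p x))
      = ∑ x, μ x * KL (q x) (p x) := by
    have hterm : ∀ (z : Z) (x : X),
        latMarg μ q z * (revCond μ q z x * KL (q x) (p x))
        = (μ x * q x z) * KL (q x) (p x) := by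
      intro z x
      rw [← mul_assoc, bar_mul_rev hμ hq]
    rw [Finset.sum_congr rfl fun z _ => Finset.sum_congr rfl fun x _ => hterm z x,
      Finset.sum_comm]
    refine Finset.sum_congr rfl fun x _ => ?_
    rcases eq_or_lt_of_le (hμ x) with hμx | hμx
    · rw [← hμx]; simp
    · calc ∑ z, μ x * q x z * KL (q x) (p x)
          = (∑ z, q x z) * (μ x * KL (q x) (p x)) := by
            rw [Finset.sum_mul]
            exact Finset.sum_congr rfl fun z _ => by ring
        _ = μ x * KL (q x) (p x) := by rw [(hq x hμx).2, one_mul]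
  -- first piece = Δ - KL(q̄‖p̄)
  have hA : ∑ z, ∑ x, latMarg μ q z * (revCond μ q z x *
        Real.log (revCond μ q z x / revCond μ p z x))
      = (∑ x, μ x * KL (q x) (p x)) - KL (latMarg μ q) (latMarg μ p) := by
    have hterm : ∀ (z : Z) (x : X),
        latMarg μ q z * (revCond μ q z x *
          Real.log (revCond μ q z x / revCond μ p z x))
        = (μ x * q x z) * Real.log (q x z / p x z)
          + (μ x * q x z) * Real.log (latMarg μ p z / latMarg μ q z) := by
      intro z x
      rcases eq_or_ne (μ x * q x z) 0 with h0 | h0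
      · have hr : revCond μ q z x = 0 := by rw [revCond_def, h0, zero_div]
        rw [hr, h0]; simp
      have hμx : 0 < μ x := by
        rcases eq_or_lt_of_le (hμ x) with h | h
        · exact absurd (by rw [← h, zero_mul]) h0
        · exact h
      have hqxz : 0 < q x z := by
        rcases eq_or_lt_of_le ((hq x hμx).1 z) with h | h
        · exact absurd (by rw [← h, mul_zero]) h0
        · exact h
      have hz : 0 < latMarg μ q z := latMarg_pos_of_term hμ hq (mul_pos hμx hqxz)
      have hpxz : 0 < p x z := by
        rcases eq_or_lt_of_le ((hp x hμx).1 z) with h | h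
        · exact absurd (habs x hμx z h.symm) hqxz.ne'
        · exact h
      have hpz : 0 < latMarg μ p z := latMarg_pos_of_term hμ hp (mul_pos hμx hpxz)
      have harg : revCond μ q z x / revCond μ p z x
          = (q x z / p x z) * (latMarg μ p z / latMarg μ q z) := by
        rw [revCond_def, revCond_def]
        field_simp
      rw [harg, Real.log_mul (div_pos hqxz hpxz).ne' (div_pos hpz hz).ne']
      have h3 := bar_mul_rev hμ hq z x
      calc latMarg μ q z * (revCond μ q z x *
            (Real.log (q x z / p x z) + Real.log (latMarg μ p z / latMarg μ q z)))
          = (latMarg μ q z * revCond μ q z x) *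
              (Real.log (q x z / p x z) + Real.log (latMarg μ p z / latMarg μ q z)) := by
            ring
        _ = (μ x * q x z) *
              (Real.log (q x z / p x z) + Real.log (latMarg μ p z / latMarg μ q z)) := by
            rw [h3]
        _ = _ := by ring
    rw [Finset.sum_congr rfl fun z _ => Finset.sum_congr rfl fun x _ => hterm z x]
    rw [Finset.sum_congr rfl fun (z : Z) _ => Finset.sum_add_distrib
      (f := fun x => (μ x * q x z) * Real.log (q x z / p x z))
      (g := fun x => (μ x * q x z) * Real.log (latMarg μ p z / latMarg μ q z)),
      Finset.sum_add_distrib]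
    have hA1 : ∑ z, ∑ x, (μ x * q x z) * Real.log (q x z / p x z)
        = ∑ x, μ x * KL (q x) (p x) := by
      rw [Finset.sum_comm]
      refine Finset.sum_congr rfl fun x _ => ?_
      rcases eq_or_lt_of_le (hμ x) with hμx | hμx
      · rw [← hμx]; simp
      · rw [KL, Finset.mul_sum]
        refine Finset.sum_congr rfl fun z _ => by ring
    have hA2 : ∑ z, ∑ x, (μ x * q x z) * Real.log (latMarg μ p z / latMarg μ q z)
        = - KL (latMarg μ q) (latMarg μ p) := by
      rw [KL, ← Finset.sum_neg_distrib]
      refine Finset.sum_congr rfl fun z _ => ?_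
      rw [← Finset.sum_mul, ← latMarg]
      rcases eq_or_lt_of_le (latMarg_nonneg hμ hq z) with h0 | h0
      · rw [← h0]; simp
      · have hpz : 0 < latMarg μ p z := latMarg_ac hμ hq hp habs h0
        rw [Real.log_div hpz.ne' h0.ne', Real.log_div h0.ne' hpz.ne']
        ring
    rw [hA1, hA2]
    ring
  rw [hA, hB]
  ring

end StepBound
/-- **Finite-horizon binary audit bound.**
With both `H`-step posterior-Gibbs path laws started from the common initial law
`q̄`, endpoint rates `η_q^{(H)} = Pr_{P_q^H}[z_H ∈ E]`, `η_p^{(H)} = Pr_{P_p^H}[z_H ∈ E]`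
and horizon-`H` agreement `A_H = 1 − η_q^{(H)}`, we have
`d_bin(1 − A_H ‖ η_p^{(H)}) ≤ H·(2·Δ̄ − KL(q̄‖p̄))`. -/
theorem finite_horizon_binary_audit
    {X Z : Type*} [Fintype X] [Fintype Z] [DecidableEq Z]
    (μ : X → ℝ) (hμ : IsPMF μ) (q p : X → Z → ℝ)
    (hq : ∀ x, 0 < μ x → IsPMF (q x)) (hp : ∀ x, 0 < μ x → IsPMF (p x))
    (habs : ∀ x, 0 < μ x → ∀ z, p x z = 0 → q x z = 0)
    (E : Finset Z) (H : ℕ) (hH : 0 < H)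
    (ηqH ηpH AH : ℝ)
    (hηq : ηqH = ∑ path : Fin (H + 1) → Z,
        pathPMF (latMarg μ q) (gibbsK μ q) H path *
          (if path (Fin.last H) ∈ E then 1 else 0))
    (hηp : ηpH = ∑ path : Fin (H + 1) → Z,
        pathPMF (latMarg μ q) (gibbsK μ p) H path *
          (if path (Fin.last H) ∈ E then 1 else 0))
    (hA : AH = 1 - ηqH) :
    dbin (1 - AH) ηpH
      ≤ (H : ℝ) *
          (2 * (∑ x, μ x * KL (q x) (p x)) - KL (latMarg μ q) (latMarg μ p)) := by
  have hμ0 := hμ.1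
  rw [hA, sub_sub_cancel]
  set A : Finset (Fin (H+1) → Z) :=
    Finset.univ.filter (fun f => f (Fin.last H) ∈ E) with hAdef
  have hQA : ∑ f ∈ A, pathPMF (latMarg μ q) (gibbsK μ q) H f = ηqH := by
    rw [hηq, hAdef, Finset.sum_filter]
    exact Finset.sum_congr rfl fun f _ => by rw [mul_ite, mul_one, mul_zero]
  have hPA : ∑ f ∈ A, pathPMF (latMarg μ q) (gibbsK μ p) H f = ηpH := by
    rw [hηp, hAdef, Finset.sum_filter]
    exact Finset.sum_congr rfl fun f _ => by rw [mul_ite, mul_one, mul_zero]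
  have hdp := dbin_le_KL (pathPMF (latMarg μ q) (gibbsK μ q) H)
    (pathPMF (latMarg μ q) (gibbsK μ p) H) A
    (pathPMF_nonneg (latMarg_nonneg hμ0 hq) (gibbsK_nonneg hμ0 hq) H)
    (pathPMF_nonneg (latMarg_nonneg hμ0 hq) (gibbsK_nonneg hμ0 hp) H)
    (pathPMF_q_sum hμ hq H)
    (pathPMF_p_sum hμ hq hp habs H)
    (by
      intro f h0
      by_contra hne
      exact (path_ac hμ0 hq hp habs hne).ne' h0)
  rw [hQA, hPA] at hdp
  refine hdp.trans ?_
  rw [KL_path hμ0 hq hp habs H]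
  exact mul_le_mul_of_nonneg_left (step_bound hμ0 hq hp habs) (Nat.cast_nonneg H)
end
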